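/- arXiv:1209.2859 — 8 statements merged into one kernel-verified Lean document; each statement's English description precedes it below -/
import Mathlib

section
/- Let L ≥ 1 be an integer and for 0 < l ≤ L define m_l(ν) := (1/l) · Σ_{n=l}^{L} [C(L,n) ν^n / (C(L,l) ν^l)] for ν > 0 (this is the expected transition time from state l to state l−1 of the birth–death process on {0,1,…,L} with birth rate (L−l)ν and death rate l in state l). Then for any integers L ≥ l₁ > l₂ ≥ 0, the expected transition time from l₁ to l₂, namely Σ_{l=l₂+1}^{l₁} m_l(ν), satisfies Σ_{l=l₂+1}^{l₁} m_l(ν) ~ (l₂!(L−l₂−1)!/L!) · ν^{L−l₂−1} as ν → ∞. -/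
open Filter Finset

/-- Expected one-step-down transition time from state `l` to state `l-1` of the
birth–death process on `{0,1,…,L}` with birth rate `(L-l)ν` and death rate `l`
in state `l`:  `m_l(ν) = (1/l) · Σ_{n=l}^{L} C(L,n) ν^n / (C(L,l) ν^l)`. -/
noncomputable def meanDownTime (L l : ℕ) (ν : ℝ) : ℝ :=
  (1 / (l : ℝ)) * ∑ n ∈ Finset.Icc l L,
    ((L.choose n : ℝ) * ν ^ n) / ((L.choose l : ℝ) * ν ^ l)

/-! Each `m_l(ν)` is a polynomial in `ν` of degree `L - l` with leading coefficient
`1 / (l C(L,l))`, so in the sum over `l₂ < l ≤ l₁` the term `l = l₂ + 1` dominates; its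
leading coefficient `1 / ((l₂+1) C(L,l₂+1))` is `l₂! (L-l₂-1)! / L!`. -/

open Asymptotics

theorem Asymptotics.isEquivalent_sum_of_isLittleO {ι α β : Type*} [NormedAddCommGroup β]
    {s : Finset ι} {f : ι → α → β} {g : α → β} {l : Filter α} {i : ι} (hi : i ∈ s)
    (hf : f i ~[l] g) (ho : ∀ j ∈ s, j ≠ i → f j =o[l] g) :
    (fun x => ∑ j ∈ s, f j x) ~[l] g := by
  classical
  have hsplit : (fun x => ∑ j ∈ s, f j x) = f i + fun x => ∑ j ∈ s.erase i, f j x := by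
    ext x
    rw [Pi.add_apply, add_sum_erase s (f · x) hi]
  rw [hsplit]
  exact hf.add_isLittleO
    (IsLittleO.fun_sum fun j hj => ho j (mem_of_mem_erase hj) (ne_of_mem_erase hj))

theorem Asymptotics.isEquivalent_atTop_sum_mul_pow {𝕜 : Type*} [NormedField 𝕜] [LinearOrder 𝕜]
    [IsStrictOrderedRing 𝕜] [OrderTopology 𝕜] {s : Finset ℕ} {c : ℕ → 𝕜} {d : ℕ}
    (hd : d ∈ s) (hmax : ∀ n ∈ s, n ≤ d) (hc : c d ≠ 0) :
    (fun x : 𝕜 => ∑ n ∈ s, c n * x ^ n) ~[atTop] fun x => c d * x ^ d :=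
  isEquivalent_sum_of_isLittleO hd IsEquivalent.refl fun n hn hne =>
    ((isLittleO_pow_pow_atTop_of_lt ((hmax n hn).lt_of_ne hne)).const_mul_left _).const_mul_right
      hc

theorem meanDownTime_eq_div (L l : ℕ) (ν : ℝ) :
    meanDownTime L l ν =
      (∑ n ∈ Icc l L, (L.choose n : ℝ) * ν ^ n) / (l * L.choose l * ν ^ l) := by
  rw [meanDownTime, ← sum_div]
  ring

theorem meanDownTime_isEquivalent {L l : ℕ} (hlL : l ≤ L) :
    meanDownTime L l ~[atTop] fun ν => (l * L.choose l : ℝ)⁻¹ * ν ^ (L - l) := by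
  have hnum := isEquivalent_atTop_sum_mul_pow (s := Icc l L) (c := fun n => (L.choose n : ℝ))
    (mem_Icc.2 ⟨hlL, le_rfl⟩) (fun n hn => (mem_Icc.1 hn).2) (by simp)
  have hquot := hnum.div (IsEquivalent.refl (u := fun ν : ℝ => l * L.choose l * ν ^ l))
  rw [show meanDownTime L l = _ from funext (meanDownTime_eq_div L l)]
  refine hquot.congr_right ((eventually_gt_atTop 0).mono fun ν hν => ?_)
  simp only [Pi.div_apply, Nat.choose_self, Nat.cast_one, one_mul]
  rw [pow_sub₀ _ hν.ne' hlL]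
  ring

theorem factorial_mul_factorial_div_factorial_eq {L l : ℕ} (hl : l < L) :
    ((l.factorial * (L - l - 1).factorial : ℕ) : ℝ) / L.factorial =
      ((l + 1 : ℕ) * L.choose (l + 1) : ℝ)⁻¹ := by
  have h := Nat.choose_mul_factorial_mul_factorial (Nat.succ_le_of_lt hl)
  rw [Nat.factorial_succ, Nat.sub_succ'] at h
  rw [← h]
  push_cast
  have := l.factorial_pos
  have := (L - l - 1).factorial_pos
  have := Nat.choose_pos (Nat.succ_le_of_lt hl)
  field_simp

theorem meanTransitionTime_asymptotics_general (L : ℕ) :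
    ∀ l₁ l₂ : ℕ, l₁ ≤ L → l₂ < l₁ →
      Tendsto
        (fun ν : ℝ => (∑ l ∈ Finset.Icc (l₂ + 1) l₁, meanDownTime L l ν) /
          (((l₂.factorial * (L - l₂ - 1).factorial : ℕ) : ℝ) / (L.factorial : ℝ)
            * ν ^ (L - l₂ - 1)))
        atTop (nhds 1) := by
  intro l₁ l₂ hl₁ hl₂
  set c : ℝ := ((l₂.factorial * (L - l₂ - 1).factorial : ℕ) : ℝ) / L.factorial with hc_def
  have hc : c ≠ 0 := by positivity
  have hequiv : (fun ν => ∑ l ∈ Icc (l₂ + 1) l₁, meanDownTime L l ν) ~[atTop]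
      fun ν => c * ν ^ (L - l₂ - 1) := by
    refine isEquivalent_sum_of_isLittleO (mem_Icc.2 ⟨le_rfl, hl₂⟩) ?_ fun l hl hne => ?_
    · rw [hc_def, factorial_mul_factorial_div_factorial_eq (by omega), Nat.sub_sub]
      exact meanDownTime_isEquivalent (by omega)
    · rw [mem_Icc] at hl
      have hsmaller : (fun ν : ℝ => ν ^ (L - l)) =o[atTop] fun ν => c * ν ^ (L - l₂ - 1) :=
        (isLittleO_pow_pow_atTop_of_lt (by omega)).const_mul_right hc
      exact (meanDownTime_isEquivalent (by omega)).isBigO.trans_isLittleO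
        (hsmaller.const_mul_left _)
  exact (isEquivalent_iff_tendsto_one ((eventually_gt_atTop 0).mono fun ν hν =>
    mul_ne_zero hc (pow_pos hν _).ne')).mp hequiv

/-- For `L ≥ l₁ > l₂ ≥ 0`, the expected transition time from `l₁` to `l₂`,
`Σ_{l=l₂+1}^{l₁} m_l(ν)`, satisfies
`Σ_{l=l₂+1}^{l₁} m_l(ν) ~ (l₂!(L−l₂−1)!/L!) · ν^{L−l₂−1}` as `ν → ∞`. -/
theorem meanTransitionTime_asymptotics (L : ℕ) (hL : 1 ≤ L) :
    ∀ l₁ l₂ : ℕ, l₁ ≤ L → l₂ < l₁ →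
      Tendsto
        (fun ν : ℝ => (∑ l ∈ Finset.Icc (l₂ + 1) l₁, meanDownTime L l ν) /
          (((l₂.factorial * (L - l₂ - 1).factorial : ℕ) : ℝ) / (L.factorial : ℝ)
            * ν ^ (L - l₂ - 1)))
        atTop (nhds 1) :=
  meanTransitionTime_asymptotics_general L
end

section
/- Let L ≥ 2. There exists ν₀ > 0 such that for all ν > ν₀ the eigenvalues of A(ν) satisfy α_1(ν) ≤ L + √(Lν) and α_i(ν) ≥ (L−1) + ν − √ν·(√L + √(2(L−1))) for every i = 2, …, L. -/
/-- The `L×L` matrix `A(ν)`: the negative of the generator, restricted to the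
transient states `{1,…,L}`, of the birth–death process on `{0,1,…,L}` in which
state `l` has birth rate `(L−l)ν` and death rate `l`, and state `0` is
absorbing.  Index `i : Fin L` represents the state `l = i + 1`. -/
noncomputable def birthDeathMat (L : ℕ) (ν : ℝ) : Matrix (Fin L) (Fin L) ℝ :=
  Matrix.of fun i j =>
    if j = i then ((L : ℝ) - ((i : ℕ) + 1)) * ν + ((i : ℕ) + 1)
    else if (j : ℕ) = (i : ℕ) + 1 then -(((L : ℝ) - ((i : ℕ) + 1)) * ν)
    else if (j : ℕ) + 1 = (i : ℕ) then -(((i : ℕ) + 1 : ℝ))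
    else 0

/-!
Conjugating by a positive diagonal matrix `D` with `D_{k+1} / D_k = √((k+2) / ((L-k-1)ν))`
turns `A(ν)` into the symmetric tridiagonal matrix `J` with the same diagonal and off-diagonal
entries `-√((L-k-1)ν (k+2))`, the geometric means of the two rates. So `A(ν)` and `J` have the
same spectrum, and we argue with the real symmetric matrix `J`.

The smallest eigenvalue of a real symmetric matrix is at most each of its diagonal entries, and the
last diagonal entry of `J` is `L`.

For the other eigenvalues, `2 |x_i J_ij x_j| ≤ |J_ij| (x_i² + x_j²)` bounds the quadratic form of
`J` below by `C ‖x‖²` on the hyperplane `x_L = 0`, as soon as every row but the last has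
Gershgorin margin `J_ii - ∑_{j ≠ i} |J_ij| ≥ C`. For `ν > 9L²` this holds with the constant `C`
of the theorem, which is exactly the margin of row `L - 1`. The eigenvectors of `α_1 < α_i` span a
plane that meets this hyperplane in a nonzero vector, on which the quadratic form is at most
`α_i ‖x‖²`; hence `α_i ≥ C`.
-/

open Matrix Finset

namespace Matrix

variable {n : Type*} [Fintype n]

theorem spectrum_diagonal_mul_mul_diagonal_inv {K : Type*} [Field K] [DecidableEq n]
    {d : n → K} (hd : ∀ i, d i ≠ 0) (M : Matrix n n K) :
    spectrum K (diagonal d * M * diagonal d⁻¹) = spectrum K M :=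
  spectrum.units_conjugate (u := ⟨diagonal d, diagonal d⁻¹, by simp [hd], by simp [hd]⟩)

theorem exists_mulVec_eq_smul_of_mem_spectrum {K : Type*} [Field K] [DecidableEq n]
    {M : Matrix n n K} {μ : K} (hμ : μ ∈ spectrum K M) : ∃ v ≠ 0, M *ᵥ v = μ • v := by
  rw [← spectrum_toLin', ← Module.End.hasEigenvalue_iff_mem_spectrum] at hμ
  obtain ⟨v, hv⟩ := hμ.exists_hasEigenvector
  exact ⟨v, hv.2, by simpa using hv.apply_eq_smul⟩

theorem IsHermitian.exists_mem_spectrum_le_apply_self [DecidableEq n] {M : Matrix n n ℝ}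
    (hM : M.IsHermitian) (i : n) : ∃ s ∈ spectrum ℝ M, s ≤ M i i := by
  by_contra! h
  set N := M - algebraMap ℝ (Matrix n n ℝ) (M i i)
  have hN : N.IsHermitian := hM.sub (by simp [IsHermitian, algebraMap_eq_diagonal])
  have hpos : N.PosDef := hN.posDef_iff_eigenvalues_pos.mpr fun j => by
    obtain ⟨s, hs, t, rfl, hst⟩ := (spectrum.sub_singleton_eq M (M i i)).symm ▸
      hN.eigenvalues_mem_spectrum_real j
    linarith [h s hs]
  simpa [N, algebraMap_matrix_apply] using hpos.diag_pos (i := i)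

theorem dotProduct_self_pos {v : n → ℝ} (hv : v ≠ 0) : 0 < v ⬝ᵥ v := by
  simpa using (dotProduct_star_self_pos_iff (v := v)).mpr hv

theorem dotProduct_eq_zero_of_mulVec_eq_smul {M : Matrix n n ℝ} (hM : Mᵀ = M) {a b : ℝ}
    {v w : n → ℝ} (hv : M *ᵥ v = a • v) (hw : M *ᵥ w = b • w) (hab : a ≠ b) :
    v ⬝ᵥ w = 0 := by
  have h : a * (v ⬝ᵥ w) = b * (v ⬝ᵥ w) := by
    rw [← smul_eq_mul, ← smul_dotProduct, ← hv, ← vecMul_transpose, hM, ← dotProduct_mulVec, hw,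
      dotProduct_smul, smul_eq_mul]
  exact (mul_eq_mul_right_iff.mp h).resolve_left hab

theorem le_of_mulVec_eq_smul_of_forall_apply_eq_zero {M : Matrix n n ℝ} (hM : Mᵀ = M)
    {a b c : ℝ} {v w : n → ℝ} (hv0 : v ≠ 0) (hv : M *ᵥ v = a • v) (hw0 : w ≠ 0)
    (hw : M *ᵥ w = b • w) (hab : a < b) (j : n)
    (hc : ∀ x : n → ℝ, x j = 0 → c * (x ⬝ᵥ x) ≤ x ⬝ᵥ (M *ᵥ x)) : c ≤ b := by
  have hvw := dotProduct_eq_zero_of_mulVec_eq_smul hM hv hw hab.ne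
  have hwv : w ⬝ᵥ v = 0 := by rwa [dotProduct_comm]
  have hspan : ∀ s t : ℝ, (s • v + t • w) ⬝ᵥ (M *ᵥ (s • v + t • w)) ≤
      b * ((s • v + t • w) ⬝ᵥ (s • v + t • w)) := fun s t => by
    simp only [mulVec_add, mulVec_smul, hv, hw, add_dotProduct, dotProduct_add, smul_dotProduct,
      dotProduct_smul, smul_eq_mul, hvw, hwv]
    nlinarith [mul_nonneg (mul_self_nonneg s) (dotProduct_self_pos hv0).le]
  obtain ⟨u, hu0, huj, hu⟩ : ∃ u ≠ 0, u j = 0 ∧ u ⬝ᵥ (M *ᵥ u) ≤ b * (u ⬝ᵥ u) := by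
    by_cases hwj : w j = 0
    · exact ⟨w, hw0, hwj, by simpa using hspan 0 1⟩
    · refine ⟨w j • v + (-v j) • w, fun h => ?_, ?_, hspan _ _⟩
      · have := congrArg (· ⬝ᵥ v) h
        simp only [add_dotProduct, smul_dotProduct, hwv, smul_eq_mul, zero_dotProduct] at this
        exact hwj (by simpa [(dotProduct_self_pos hv0).ne'] using this)
      · simp only [Pi.add_apply, Pi.smul_apply, smul_eq_mul]
        ring
  exact le_of_mul_le_mul_right ((hc u huj).trans hu) (dotProduct_self_pos hu0)

theorem sum_diag_sub_offDiag_mul_sq_le_dotProduct_mulVec [DecidableEq n] {M : Matrix n n ℝ}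
    (hM : Mᵀ = M) (x : n → ℝ) :
    ∑ i, (M i i - ∑ j ∈ univ.erase i, |M i j|) * x i ^ 2 ≤ x ⬝ᵥ (M *ᵥ x) := by
  set r : n → n → ℝ := fun i j => if j ≠ i then |M i j| else 0 with hr
  have hrow : ∀ i, ∑ j ∈ univ.erase i, |M i j| = ∑ j, r i j := fun i => by
    rw [hr, ← sum_filter, filter_ne']
  have hr_symm : ∀ i j, r j i = r i j := fun i j => by
    simp only [hr, ne_comm, ← transpose_apply M i j, hM]
  have hterm : ∀ i j, (if j = i then M i i * x i ^ 2 else 0) - r i j * (x i ^ 2 + x j ^ 2) / 2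
      ≤ x i * (M i j * x j) := fun i j => by
    by_cases hji : j = i
    · subst hji
      simp only [↓reduceIte, hr, ne_eq, ite_not, zero_mul, zero_div, sub_zero]
      exact le_of_eq (by ring)
    · simp only [hr, if_neg hji, if_pos hji, ne_eq]
      cases abs_cases (M i j) <;> nlinarith [sq_nonneg (x i + x j), sq_nonneg (x i - x j)]
  have hswap : ∑ i, ∑ j, r i j * x j ^ 2 = ∑ i, ∑ j, r i j * x i ^ 2 := by
    rw [sum_comm]; simp only [hr_symm]
  calc ∑ i, (M i i - ∑ j ∈ univ.erase i, |M i j|) * x i ^ 2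
      = ∑ i, ∑ j, ((if j = i then M i i * x i ^ 2 else 0) - r i j * (x i ^ 2 + x j ^ 2) / 2) := by
        simp only [sum_sub_distrib, sum_ite_eq', mem_univ, if_true, hrow, sub_mul, sum_mul,
          mul_add, add_div, sum_add_distrib, ← sum_div, hswap]
        ring
    _ ≤ x ⬝ᵥ (M *ᵥ x) := by
        simp only [dotProduct, mulVec, mul_sum]
        exact sum_le_sum fun i _ => sum_le_sum fun j _ => hterm i j

theorem mul_dotProduct_self_le_dotProduct_mulVec_of_apply_eq_zero [DecidableEq n]
    {M : Matrix n n ℝ} (hM : Mᵀ = M) {c : ℝ} {j : n}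
    (hc : ∀ i ≠ j, c ≤ M i i - ∑ k ∈ univ.erase i, |M i k|) {x : n → ℝ} (hx : x j = 0) :
    c * (x ⬝ᵥ x) ≤ x ⬝ᵥ (M *ᵥ x) :=
  calc c * (x ⬝ᵥ x) = ∑ i, c * x i ^ 2 := by simp only [dotProduct, mul_sum, sq]
    _ ≤ ∑ i, (M i i - ∑ k ∈ univ.erase i, |M i k|) * x i ^ 2 := sum_le_sum fun i _ => by
        by_cases hij : i = j
        · simp [hij, hx]
        · exact mul_le_mul_of_nonneg_right (hc i hij) (sq_nonneg _)
    _ ≤ x ⬝ᵥ (M *ᵥ x) := sum_diag_sub_offDiag_mul_sq_le_dotProduct_mulVec hM x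

def symmTridiagonal (m : ℕ) (a b : ℕ → ℝ) : Matrix (Fin m) (Fin m) ℝ :=
  of fun i j =>
    if j = i then a i
    else if (j : ℕ) = i + 1 then b i
    else if (j : ℕ) + 1 = i then b j
    else 0

variable {m : ℕ} {a b : ℕ → ℝ}

@[simp]
theorem symmTridiagonal_apply_self (i : Fin m) : symmTridiagonal m a b i i = a i := by
  simp [symmTridiagonal]

theorem symmTridiagonal_transpose : (symmTridiagonal m a b)ᵀ = symmTridiagonal m a b := by
  ext i j
  simp only [transpose_apply, symmTridiagonal, of_apply, Fin.ext_iff]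
  split_ifs <;> first | omega | congr 1

theorem isHermitian_symmTridiagonal : (symmTridiagonal m a b).IsHermitian := by
  rw [IsHermitian, conjTranspose_eq_transpose_of_trivial, symmTridiagonal_transpose]

-- For `i = 0` the truncated `i - 1 = 0` makes the bound count `|b 0|` twice.
theorem sum_abs_symmTridiagonal_offDiag_le (i : Fin m) :
    ∑ j ∈ univ.erase i, |symmTridiagonal m a b i j| ≤ |b i| + |b (i - 1)| := by
  have hsingle : ∀ (k : ℕ) (c : ℝ), 0 ≤ c → ∑ j : Fin m, (if (j : ℕ) = k then c else 0) ≤ c :=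
    fun k c hc => by
      rw [Fin.sum_univ_eq_sum_range (fun j => if j = k then c else 0), sum_ite_eq']
      split_ifs <;> simp [hc]
  calc ∑ j ∈ univ.erase i, |symmTridiagonal m a b i j|
      ≤ ∑ j : Fin m, ((if (j : ℕ) = i + 1 then |b i| else 0) +
          if (j : ℕ) = i - 1 then |b (i - 1)| else 0) := by
        refine (sum_le_sum fun j hj => ?_).trans
          (sum_le_sum_of_subset_of_nonneg (subset_univ _) fun j _ _ => by positivity)
        simp only [symmTridiagonal, of_apply, if_neg (ne_of_mem_erase hj)]
        split_ifs <;> first | omega | simp [*]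
    _ ≤ |b i| + |b (i - 1)| := by
        rw [sum_add_distrib]
        exact add_le_add (hsingle _ _ (abs_nonneg _)) (hsingle _ _ (abs_nonneg _))

end Matrix

theorem Real.sqrt_mul_eq_mul_sqrt_div {c : ℝ} (hc : 0 < c) (m : ℝ) :
    √(c * m) = c * √(m / c) := by
  rw [show c * m = c ^ 2 * (m / c) by field_simp, Real.sqrt_mul (sq_nonneg c),
    Real.sqrt_sq hc.le]

noncomputable def birthDeathSymmOffDiag (L : ℕ) (ν : ℝ) (k : ℕ) : ℝ :=
  √(((L : ℝ) - (k + 1)) * ν * (k + 2))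

noncomputable def birthDeathSymm (L : ℕ) (ν : ℝ) : Matrix (Fin L) (Fin L) ℝ :=
  symmTridiagonal L (fun k => ((L : ℝ) - (k + 1)) * ν + (k + 1))
    (fun k => -birthDeathSymmOffDiag L ν k)

noncomputable def birthDeathSymmScale (L : ℕ) (ν : ℝ) (k : ℕ) : ℝ :=
  ∏ m ∈ range k, √((m + 2) / (((L : ℝ) - (m + 1)) * ν))

section

variable {L : ℕ} {ν : ℝ}

theorem birthDeathSymmScale_pos (hν : 0 < ν) {k : ℕ} (hk : k < L) :
    0 < birthDeathSymmScale L ν k :=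
  prod_pos fun m hm => Real.sqrt_pos.mpr <| div_pos (by positivity) <| mul_pos
    (sub_pos.mpr (by exact_mod_cast (show m + 1 < L by rw [mem_range] at hm; omega))) hν

theorem birthDeathSymmScale_succ (k : ℕ) :
    birthDeathSymmScale L ν (k + 1) =
      birthDeathSymmScale L ν k * √((k + 2) / (((L : ℝ) - (k + 1)) * ν)) :=
  prod_range_succ _ _

theorem birthDeathMat_eq_diagonal_mul_birthDeathSymm_mul_diagonal_inv (hν : 0 < ν) :
    birthDeathMat L ν = diagonal (fun i : Fin L => birthDeathSymmScale L ν i) *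
      birthDeathSymm L ν * diagonal (fun i : Fin L => birthDeathSymmScale L ν i)⁻¹ := by
  ext i j
  have hd : ∀ k : Fin L, birthDeathSymmScale L ν k ≠ 0 := fun k =>
    (birthDeathSymmScale_pos hν k.2).ne'
  simp only [mul_diagonal, diagonal_mul, Pi.inv_apply, birthDeathMat, birthDeathSymm,
    symmTridiagonal, birthDeathSymmOffDiag, of_apply]
  split_ifs with hji hsup hsub
  · subst hji
    field_simp [hd j]
  · have hc : 0 < ((L : ℝ) - ((i : ℕ) + 1)) * ν :=
      mul_pos (sub_pos.mpr (by exact_mod_cast (show (i : ℕ) + 1 < L by omega))) hν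
    have hs : 0 < √((((i : ℕ) : ℝ) + 2) / (((L : ℝ) - ((i : ℕ) + 1)) * ν)) := by positivity
    rw [hsup, birthDeathSymmScale_succ, Real.sqrt_mul_eq_mul_sqrt_div hc]
    field_simp [hd i, hs.ne']
  · have hc : 0 < ((L : ℝ) - ((j : ℕ) + 1)) * ν :=
      mul_pos (sub_pos.mpr (by exact_mod_cast (show (j : ℕ) + 1 < L by omega))) hν
    have hs : 0 ≤ (((j : ℕ) : ℝ) + 2) / (((L : ℝ) - ((j : ℕ) + 1)) * ν) := by positivity
    rw [← hsub, birthDeathSymmScale_succ, Real.sqrt_mul_eq_mul_sqrt_div hc]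
    field_simp [hd j]
    rw [Real.sq_sqrt hs, mul_div_cancel₀ _ hc.ne']
    push_cast
    ring
  · simp

theorem spectrum_birthDeathMat (hν : 0 < ν) :
    spectrum ℝ (birthDeathMat L ν) = spectrum ℝ (birthDeathSymm L ν) := by
  rw [birthDeathMat_eq_diagonal_mul_birthDeathSymm_mul_diagonal_inv hν,
    spectrum_diagonal_mul_mul_diagonal_inv fun i => (birthDeathSymmScale_pos hν i.2).ne']

theorem birthDeathSymmOffDiag_le (hν : 0 ≤ ν) {k : ℕ} (hk : k + 2 ≤ L) :
    birthDeathSymmOffDiag L ν k ≤ L * √ν := by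
  have hkL : (k : ℝ) + 2 ≤ L := by exact_mod_cast hk
  have hprod : ((L : ℝ) - (k + 1)) * (k + 2) ≤ (L : ℝ) ^ 2 := by nlinarith
  calc birthDeathSymmOffDiag L ν k ≤ √((L : ℝ) ^ 2 * ν) :=
        Real.sqrt_le_sqrt (by nlinarith [mul_le_mul_of_nonneg_right hprod hν])
    _ = L * √ν := by rw [Real.sqrt_mul (sq_nonneg _), Real.sqrt_sq (Nat.cast_nonneg _)]

theorem le_birthDeathSymm_diag_sub_offDiag (hν : 9 * (L : ℝ) ^ 2 < ν) (i : Fin L)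
    (hi : (i : ℕ) + 2 ≤ L) :
    ((L : ℝ) - 1) + ν - √ν * (√(L : ℝ) + √(2 * ((L : ℝ) - 1))) ≤
      birthDeathSymm L ν i i - ∑ j ∈ univ.erase i, |birthDeathSymm L ν i j| := by
  have hν0 : 0 < ν := lt_of_le_of_lt (by positivity) hν
  have hrow := sum_abs_symmTridiagonal_offDiag_le
    (a := fun k => ((L : ℝ) - (k + 1)) * ν + (k + 1)) (b := fun k => -birthDeathSymmOffDiag L ν k) i
  have hoff : ∀ k, |-birthDeathSymmOffDiag L ν k| = birthDeathSymmOffDiag L ν k := fun k =>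
    (abs_neg _).trans (abs_of_nonneg (Real.sqrt_nonneg _))
  rw [hoff, hoff] at hrow
  rw [birthDeathSymm, symmTridiagonal_apply_self]
  have hC : 0 ≤ √ν * (√(L : ℝ) + √(2 * ((L : ℝ) - 1))) := by positivity
  rcases hi.eq_or_lt with hlast | hi
  · generalize (i : ℕ) = k at *
    have hL : (L : ℝ) = k + 2 := by exact_mod_cast hlast.symm
    have h1 : birthDeathSymmOffDiag L ν k = √ν * √(L : ℝ) := by
      rw [birthDeathSymmOffDiag, ← Real.sqrt_mul hν0.le, hL]
      ring_nf
    -- also for `k = 0`, where `k - 1` truncates to `0`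
    have h2 : birthDeathSymmOffDiag L ν (k - 1) = √ν * √(2 * ((L : ℝ) - 1)) := by
      rw [birthDeathSymmOffDiag, ← Real.sqrt_mul hν0.le, hL]
      rcases k with _ | k <;> push_cast <;> ring_nf
    have h3 : ((L : ℝ) - ((k : ℝ) + 1)) * ν + ((k : ℝ) + 1) = (L - 1) + ν := by
      rw [hL]; ring
    rw [h3]
    linarith
  · have hs : 3 * (L : ℝ) ≤ √ν := Real.le_sqrt_of_sq_le (by nlinarith)
    have h1 := birthDeathSymmOffDiag_le hν0.le hi.le
    have h2 := birthDeathSymmOffDiag_le (L := L) hν0.le (k := (i : ℕ) - 1) (by omega)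
    have hiL : (((i : ℕ) : ℝ) + 3) ≤ L := by exact_mod_cast hi
    have hL1 : (1 : ℝ) ≤ L := by linarith [(Nat.cast_nonneg (α := ℝ) (i : ℕ))]
    nlinarith [Real.sq_sqrt hν0.le, (Nat.cast_nonneg (α := ℝ) (i : ℕ))]

end

/-- Let `L ≥ 2` and let `0 < α_1(ν) < ⋯ < α_L(ν)` denote the (real, distinct,
strictly positive) eigenvalues of `A(ν)`, for `ν > 0`.  Then there exists
`ν₀ > 0` such that for all `ν > ν₀`:
`α_1(ν) ≤ L + √(Lν)` and
`α_i(ν) ≥ (L−1) + ν − √ν (√L + √(2(L−1)))` for every `i = 2, …, L`. -/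
theorem birthDeathMat_gershgorin_eigenvalue_bounds (L : ℕ) (hL : 2 ≤ L)
    (α : ℝ → Fin L → ℝ)
    (hα : ∀ ν : ℝ, 0 < ν → StrictMono (α ν) ∧ (∀ i, 0 < α ν i) ∧
      spectrum ℝ (birthDeathMat L ν) = Set.range (α ν)) :
    ∃ ν₀ : ℝ, 0 < ν₀ ∧ ∀ ν : ℝ, ν₀ < ν →
      α ν ⟨0, by omega⟩ ≤ (L : ℝ) + Real.sqrt ((L : ℝ) * ν) ∧
      ∀ i : Fin L, 0 < (i : ℕ) →
        ((L : ℝ) - 1) + ν - Real.sqrt ν * (Real.sqrt (L : ℝ)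
          + Real.sqrt (2 * ((L : ℝ) - 1))) ≤ α ν i := by
  refine ⟨9 * (L : ℝ) ^ 2, by positivity, fun ν hν => ?_⟩
  have hν0 : 0 < ν := lt_of_le_of_lt (by positivity) hν
  obtain ⟨hmono, -, hspec⟩ := hα ν hν0
  rw [spectrum_birthDeathMat hν0] at hspec
  have hmem : ∀ i, α ν i ∈ spectrum ℝ (birthDeathSymm L ν) := fun i =>
    hspec ▸ Set.mem_range_self i
  let last : Fin L := ⟨L - 1, by omega⟩
  constructor
  · obtain ⟨s, hs, hsle⟩ := isHermitian_symmTridiagonal.exists_mem_spectrum_le_apply_self last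
    obtain ⟨k, rfl⟩ := hspec ▸ hs
    calc α ν ⟨0, by omega⟩ ≤ α ν k := hmono.monotone (Nat.zero_le _)
      _ ≤ birthDeathSymm L ν last last := hsle
      _ = L := by simp [birthDeathSymm, last, Nat.cast_sub (by omega : 1 ≤ L)]
      _ ≤ L + √(L * ν) := le_add_of_nonneg_right (Real.sqrt_nonneg _)
  · intro i hi
    obtain ⟨v, hv0, hv⟩ := exists_mulVec_eq_smul_of_mem_spectrum (hmem ⟨0, by omega⟩)
    obtain ⟨w, hw0, hw⟩ := exists_mulVec_eq_smul_of_mem_spectrum (hmem i)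
    refine le_of_mulVec_eq_smul_of_forall_apply_eq_zero symmTridiagonal_transpose hv0 hv hw0 hw
      (hmono hi) last fun x hx => ?_
    refine mul_dotProduct_self_le_dotProduct_mulVec_of_apply_eq_zero symmTridiagonal_transpose
      (fun j hj => le_birthDeathSymm_diag_sub_offDiag hν j ?_) hx
    have : (j : ℕ) ≠ L - 1 := Fin.val_ne_of_ne hj
    omega
end

section
/- Define m(ν) := Σ_{i=1}^{L} 1/α_i(ν) (which, by the Karlin–McGregor/Keilson theorem, equals the mean escape time E T_{L,0}(ν) of the birth–death process from state L to the absorbing state 0). Then lim_{ν→∞} α_1(ν)·m(ν) = 1, and lim_{ν→∞} α_i(ν)·m(ν) = ∞ for every i = 2, …, L. -/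
open Filter

/-!
The eigenvalues satisfy `∏ αᵢ = det A(ν) = L!` and `αᵢ ≤ ∑ αⱼ = tr A(ν) = O(ν)`. The chain is
reversible for the binomial weights `πᵢ = C(L, i+1) νⁱ`, so `A(ν)` is self-adjoint for the
`π`-weighted inner product, and the Rayleigh quotient of the constant vector gives
`α₁ ≤ π₀ / ∑ πᵢ ≤ L / ν^(L-1)`. Hence `α₂ ≥ L! / (α₁ O(ν)^(L-2))`, so `α₁ / α₂ = O(ν^(-L)) → 0`,
and both limits follow from `1 ≤ α₁ m ≤ 1 + (L - 1) α₁ / α₂` and `αᵢ m ≥ α₂ / α₁` for `i ≥ 2`.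
-/

open Topology Matrix
open scoped Nat

namespace Matrix

variable {n : Type*} [Fintype n] [DecidableEq n]

section Spectrum

variable {K : Type*} [Field K] {M : Matrix n n K} {β : n → K}

lemma roots_charpoly_eq_of_spectrum_eq_range (hβ : Function.Injective β)
    (h : spectrum K M = Set.range β) : M.charpoly.roots = Finset.univ.val.map β := by
  have hsub : Finset.univ.val.map β ≤ M.charpoly.roots := by
    rw [Multiset.le_iff_subset (Finset.univ.nodup.map hβ)]
    rintro _ hx
    obtain ⟨i, -, rfl⟩ := Multiset.mem_map.mp hx
    rw [Polynomial.mem_roots M.charpoly_monic.ne_zero, ← mem_spectrum_iff_isRoot_charpoly, h]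
    exact Set.mem_range_self i
  refine (Multiset.eq_of_le_of_card_le hsub ?_).symm
  simpa [M.charpoly_natDegree_eq_dim] using M.charpoly.card_roots'

lemma splits_charpoly_of_spectrum_eq_range (hβ : Function.Injective β)
    (h : spectrum K M = Set.range β) : M.charpoly.Splits := by
  rw [Polynomial.splits_iff_card_roots, roots_charpoly_eq_of_spectrum_eq_range hβ h,
    M.charpoly_natDegree_eq_dim]
  simp

lemma det_eq_prod_of_spectrum_eq_range (hβ : Function.Injective β)
    (h : spectrum K M = Set.range β) : M.det = ∏ i, β i := by
  rw [det_eq_prod_roots_charpoly_of_splits (splits_charpoly_of_spectrum_eq_range hβ h),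
    roots_charpoly_eq_of_spectrum_eq_range hβ h]
  rfl

lemma trace_eq_sum_of_spectrum_eq_range (hβ : Function.Injective β)
    (h : spectrum K M = Set.range β) : M.trace = ∑ i, β i := by
  rw [trace_eq_sum_roots_charpoly_of_splits (splits_charpoly_of_spectrum_eq_range hβ h),
    roots_charpoly_eq_of_spectrum_eq_range hβ h]
  rfl

end Spectrum

lemma IsHermitian.mul_dotProduct_self_le {S : Matrix n n ℝ} (hS : S.IsHermitian) {a : ℝ}
    (ha : ∀ x ∈ spectrum ℝ S, a ≤ x) (v : n → ℝ) : a * (v ⬝ᵥ v) ≤ v ⬝ᵥ (S *ᵥ v) := by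
  have hpsd : (S - algebraMap ℝ _ a).PosSemidef := by
    refine posSemidef_iff_isHermitian_and_spectrum_nonneg.mpr
      ⟨hS.sub (isHermitian_diagonal _), ?_⟩
    rw [← spectrum.sub_singleton_eq]
    rintro _ ⟨x, hx, _, rfl, rfl⟩
    exact sub_nonneg.mpr (ha x hx)
  have := hpsd.dotProduct_mulVec_nonneg v
  simpa [sub_mulVec, Algebra.algebraMap_eq_smul_one, smul_mulVec, dotProduct_smul] using this

lemma mul_sum_le_of_detailedBalance {A : Matrix n n ℝ} {π : n → ℝ} (hπ : ∀ i, 0 < π i)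
    (hA : ∀ i j, π i * A i j = π j * A j i) {a : ℝ} (ha : ∀ x ∈ spectrum ℝ A, a ≤ x)
    (x : n → ℝ) : a * ∑ i, π i * x i ^ 2 ≤ ∑ i, π i * x i * (A *ᵥ x) i := by
  set d : n → ℝ := fun i => √(π i)
  have hd : ∀ i, d i ≠ 0 := fun i => (Real.sqrt_pos.mpr (hπ i)).ne'
  have hd_sq : ∀ i, d i * d i = π i := fun i => Real.mul_self_sqrt (hπ i).le
  let D : (Matrix n n ℝ)ˣ := ⟨diagonal d, diagonal d⁻¹, by simp [hd], by simp [hd]⟩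
  have hspec : spectrum ℝ (diagonal d * A * diagonal d⁻¹) = spectrum ℝ A :=
    spectrum.units_conjugate (u := D)
  have hS : (diagonal d * A * diagonal d⁻¹).IsHermitian := by
    ext i j
    simp only [conjTranspose_apply, star_trivial, diagonal_mul, mul_diagonal, Pi.inv_apply]
    field_simp [hd i, hd j]
    linear_combination A j i * hd_sq j - A i j * hd_sq i - hA i j
  have hSv : (diagonal d * A * diagonal d⁻¹) *ᵥ (d * x) = d * (A *ᵥ x) := by
    have hx : diagonal d⁻¹ *ᵥ (d * x) = x := by ext i; simp [mulVec_diagonal, hd]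
    rw [← mulVec_mulVec, ← mulVec_mulVec, hx]
    ext i
    exact mulVec_diagonal _ _ i
  have hrayleigh := hS.mul_dotProduct_self_le (hspec ▸ ha) (d * x)
  convert hrayleigh using 1 <;>
    simp only [hSv, dotProduct, Finset.mul_sum, ← hd_sq, Pi.mul_apply] <;>
    exact Finset.sum_congr rfl fun i _ => by ring

end Matrix

section PositiveTuple

lemma one_le_mul_sum_inv {ι : Type*} [Fintype ι] {α : ι → ℝ} (hα : ∀ i, 0 < α i) (i : ι) :
    1 ≤ α i * ∑ j, (α j)⁻¹ :=
  calc 1 = α i * (α i)⁻¹ := (mul_inv_cancel₀ (hα i).ne').symm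
    _ ≤ α i * ∑ j, (α j)⁻¹ := mul_le_mul_of_nonneg_left
        (Finset.single_le_sum (fun j _ => (inv_pos.2 (hα j)).le) (Finset.mem_univ i)) (hα i).le

variable {n : ℕ} {α : Fin (n + 2) → ℝ}

lemma mul_sum_inv_le (hmono : Monotone α) (hα : ∀ i, 0 < α i) :
    α 0 * ∑ j, (α j)⁻¹ ≤ 1 + (n + 1) * (α 0 / α 1) := by
  have htail : ∑ j : Fin (n + 1), (α j.succ)⁻¹ ≤ (n + 1) * (α 1)⁻¹ := by
    calc ∑ j : Fin (n + 1), (α j.succ)⁻¹ ≤ ∑ _j : Fin (n + 1), (α 1)⁻¹ :=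
          Finset.sum_le_sum fun j _ =>
            inv_anti₀ (hα 1) (hmono (Fin.le_iff_val_le_val.mpr (by simp)))
      _ = (n + 1) * (α 1)⁻¹ := by simp
  rw [Fin.sum_univ_succ, mul_add, mul_inv_cancel₀ (hα 0).ne', div_eq_mul_inv]
  nlinarith [hα 0]

lemma div_le_mul_sum_inv (hmono : Monotone α) (hα : ∀ i, 0 < α i) {i : Fin (n + 2)}
    (hi : i ≠ 0) : α 1 / α 0 ≤ α i * ∑ j, (α j)⁻¹ := by
  have h1i : α 1 ≤ α i := hmono (Fin.one_le_of_ne_zero hi)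
  calc α 1 / α 0 ≤ α i * (α 0)⁻¹ := by
        rw [div_eq_mul_inv]; exact mul_le_mul_of_nonneg_right h1i (inv_pos.2 (hα 0)).le
    _ ≤ α i * ∑ j, (α j)⁻¹ := mul_le_mul_of_nonneg_left
        (Finset.single_le_sum (fun j _ => (inv_pos.2 (hα j)).le) (Finset.mem_univ 0)) (hα i).le

lemma div_le_sq_mul_pow_div_prod (hα : ∀ i, 0 < α i) {T : ℝ} (hT : ∀ i, α i ≤ T) :
    α 0 / α 1 ≤ α 0 ^ 2 * T ^ n / ∏ i, α i := by
  have hprod : ∏ i, α i ≤ α 0 * α 1 * T ^ n := by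
    rw [Fin.prod_univ_succ, Fin.prod_univ_succ, ← mul_assoc]
    refine mul_le_mul_of_nonneg_left ?_ (mul_nonneg (hα 0).le (hα 1).le)
    calc ∏ i : Fin n, α i.succ.succ ≤ ∏ _i : Fin n, T :=
          Finset.prod_le_prod (fun i _ => (hα _).le) fun i _ => hT _
      _ = T ^ n := by simp
  rw [div_le_div_iff₀ (hα 1) (Finset.prod_pos fun i _ => hα i)]
  nlinarith [hα 0, hα 1]

lemma tendsto_mul_sum_inv {ι : Type*} {l : Filter ι} {α : ι → Fin (n + 2) → ℝ}
    (hα : ∀ᶠ x in l, Monotone (α x) ∧ ∀ i, 0 < α x i)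
    (hdiv : Tendsto (fun x => α x 0 / α x 1) l (𝓝 0)) :
    Tendsto (fun x => α x 0 * ∑ j, (α x j)⁻¹) l (𝓝 1) ∧
      ∀ i ≠ 0, Tendsto (fun x => α x i * ∑ j, (α x j)⁻¹) l atTop := by
  refine ⟨?_, fun i hi => ?_⟩
  · have hupper : Tendsto (fun x => 1 + (n + 1) * (α x 0 / α x 1)) l (𝓝 1) := by
      simpa using (hdiv.const_mul ((n : ℝ) + 1)).const_add 1
    refine tendsto_of_tendsto_of_tendsto_of_le_of_le' tendsto_const_nhds hupper ?_ ?_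
    · filter_upwards [hα] with x hx using one_le_mul_sum_inv hx.2 0
    · filter_upwards [hα] with x hx using mul_sum_inv_le hx.1 hx.2
  · have hdiv' : Tendsto (fun x => α x 0 / α x 1) l (𝓝[>] 0) :=
      tendsto_nhdsWithin_iff.mpr ⟨hdiv, by
        filter_upwards [hα] with x hx using div_pos (hx.2 0) (hx.2 1)⟩
    refine tendsto_atTop_mono' l ?_ hdiv'.inv_tendsto_nhdsGT_zero
    filter_upwards [hα] with x hx
    simpa using div_le_mul_sum_inv hx.1 hx.2 hi

end PositiveTuple

lemma Fin.sum_ite_val_eq {M : Type*} [AddCommMonoid M] {L : ℕ} (m : ℕ) (f : Fin L → M) :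
    ∑ k : Fin L, (if (k : ℕ) = m then f k else 0) = if h : m < L then f ⟨m, h⟩ else 0 := by
  split_ifs with h
  · rw [Finset.sum_eq_single_of_mem ⟨m, h⟩ (Finset.mem_univ _)] <;> simp +contextual [Fin.ext_iff]
  · exact Finset.sum_eq_zero fun k _ => if_neg (by omega)

-- Rates of the state `l = i + 1`, matching the indexing of `birthDeathMat`.
def birthRate (L : ℕ) (ν : ℝ) (i : ℕ) : ℝ := ((L : ℝ) - (i + 1)) * ν

def deathRate (i : ℕ) : ℝ := i + 1

-- Detailed balance `π (i + 1) / π i = birthRate i / deathRate (i + 1)` telescopes to these weights.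
def birthDeathWeight (L : ℕ) (ν : ℝ) (i : ℕ) : ℝ := ν ^ i * L.choose (i + 1)

section BirthDeath

variable {L : ℕ} {ν : ℝ}

lemma birthRate_eq_zero {i : ℕ} (h : i + 1 = L) : birthRate L ν i = 0 := by
  simp [birthRate, ← h]

lemma birthRate_add_deathRate_le {i : ℕ} (hi : i < L) (hν : 0 ≤ ν) :
    birthRate L ν i + deathRate i ≤ L * (ν + 1) := by
  have : (i : ℝ) + 1 ≤ L := by exact_mod_cast hi
  simp only [birthRate, deathRate]
  nlinarith

lemma birthDeathMat_apply_eq (i k : Fin L) :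
    birthDeathMat L ν i k =
      (if (k : ℕ) = i then birthRate L ν i + deathRate i else 0)
      - (if (k : ℕ) = i + 1 then birthRate L ν i else 0)
      - (if (k : ℕ) + 1 = i then deathRate i else 0) := by
  simp only [birthDeathMat, birthRate, deathRate, of_apply, Fin.ext_iff]
  split_ifs <;> first | omega | ring

lemma birthDeathMat_mulVec_apply (x : ℕ → ℝ) (i : Fin L) :
    (birthDeathMat L ν *ᵥ fun k => x k) i =
      (birthRate L ν i + deathRate i) * x i - birthRate L ν i * x (i + 1)
      - if (i : ℕ) = 0 then 0 else deathRate i * x (i - 1) := by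
  simp only [mulVec, dotProduct, birthDeathMat_apply_eq, sub_mul, ite_mul, zero_mul,
    Finset.sum_sub_distrib, Fin.sum_ite_val_eq, i.isLt, dite_true]
  congr 1
  · by_cases h : (i : ℕ) + 1 < L
    · simp [h]
    · simp [h, birthRate_eq_zero (show (i : ℕ) + 1 = L by omega)]
  · obtain ⟨_ | i, hi⟩ := i
    · simp
    · simp [Fin.sum_ite_val_eq, show i < L by omega]

lemma birthDeathMat_mulVec_one :
    birthDeathMat L ν *ᵥ (fun _ => 1) = fun i : Fin L => if (i : ℕ) = 0 then (1 : ℝ) else 0 := by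
  ext i
  have := birthDeathMat_mulVec_apply (L := L) (ν := ν) (fun _ => 1) i
  split_ifs at this ⊢ with h <;> simp_all [deathRate]

/-- Multiplying by the lower unitriangular matrix of ones makes `A(ν)` upper triangular,
with the death rates on the diagonal. -/
lemma det_birthDeathMat : (birthDeathMat L ν).det = L ! := by
  set T : Matrix (Fin L) (Fin L) ℝ := of fun k j => if (j : ℕ) ≤ k then 1 else 0
  have hT : T.det = 1 := by
    rw [det_of_isLowerTriangular T fun k j hjk => if_neg (by simpa using hjk)]
    simp [T]
  have hAT : ∀ i j, (birthDeathMat L ν * T) i j =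
      (birthRate L ν i + deathRate i) * (if (j : ℕ) ≤ i then 1 else 0)
      - birthRate L ν i * (if (j : ℕ) ≤ i + 1 then 1 else 0)
      - if (i : ℕ) = 0 then 0 else deathRate i * (if (j : ℕ) ≤ i - 1 then 1 else 0) :=
    fun i j => birthDeathMat_mulVec_apply (fun k => if (j : ℕ) ≤ k then 1 else 0) i
  have hupper : (birthDeathMat L ν * T).IsUpperTriangular := by
    intro i j hji
    have : (j : ℕ) < i := hji
    rw [hAT, if_pos (by omega), if_pos (by omega), if_neg (by omega), if_pos (by omega)]
    ring
  have hdiag : ∀ i, (birthDeathMat L ν * T) i i = deathRate i := by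
    intro i
    rw [hAT]
    split_ifs <;> first | omega | ring
  rw [← mul_one (det _), ← hT, ← det_mul, det_of_isUpperTriangular hupper]
  simp only [hdiag, deathRate]
  rw [Fin.prod_univ_eq_prod_range (fun i => (i : ℝ) + 1)]
  exact_mod_cast Finset.prod_range_add_one_eq_factorial L

lemma trace_birthDeathMat_le (hν : 0 ≤ ν) : (birthDeathMat L ν).trace ≤ L ^ 2 * (ν + 1) := by
  calc (birthDeathMat L ν).trace = ∑ i : Fin L, (birthRate L ν i + deathRate i) := by
        simp [trace, birthDeathMat_apply_eq]
    _ ≤ ∑ _i : Fin L, L * (ν + 1) :=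
        Finset.sum_le_sum fun i _ => birthRate_add_deathRate_le i.isLt hν
    _ = L ^ 2 * (ν + 1) := by
        rw [Finset.sum_const, Finset.card_univ, Fintype.card_fin, nsmul_eq_mul]
        ring

lemma birthDeathWeight_pos (hν : 0 < ν) {i : ℕ} (hi : i < L) : 0 < birthDeathWeight L ν i :=
  mul_pos (pow_pos hν i) (by exact_mod_cast Nat.choose_pos hi)

lemma birthDeathWeight_mul_birthDeathMat (i k : Fin L) :
    birthDeathWeight L ν i * birthDeathMat L ν i k =
      birthDeathWeight L ν k * birthDeathMat L ν k i := by
  have hbalance : ∀ m : ℕ, m + 1 < L → birthDeathWeight L ν m * birthRate L ν m =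
      birthDeathWeight L ν (m + 1) * deathRate (m + 1) := by
    intro m hm
    have h : ((L.choose (m + 1 + 1) * (m + 1 + 1) : ℕ) : ℝ) =
        (L.choose (m + 1) * (L - (m + 1)) : ℕ) :=
      congrArg Nat.cast (Nat.choose_succ_right_eq L (m + 1))
    push_cast [Nat.cast_sub hm.le] at h
    simp only [birthDeathWeight, birthRate, deathRate, pow_succ]
    push_cast
    linear_combination -(ν ^ m * ν) * h
  obtain ⟨i, hi⟩ := i
  obtain ⟨k, hk⟩ := k
  rw [birthDeathMat_apply_eq, birthDeathMat_apply_eq]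
  simp only
  split_ifs <;> subst_vars <;>
    first | omega | linear_combination -hbalance i hk | linear_combination hbalance k hi | ring

lemma mul_pow_le_of_le_spectrum_birthDeathMat (hL : 0 < L) (hν : 0 < ν) {a : ℝ}
    (ha : ∀ x ∈ spectrum ℝ (birthDeathMat L ν), a ≤ x) : a * ν ^ (L - 1) ≤ L := by
  have h := mul_sum_le_of_detailedBalance (fun i : Fin L => birthDeathWeight_pos hν i.isLt)
    birthDeathWeight_mul_birthDeathMat ha (fun _ => 1)
  simp only [one_pow, mul_one, birthDeathMat_mulVec_one, mul_ite, mul_zero,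
    Fin.sum_ite_val_eq] at h
  have h0 : birthDeathWeight L ν 0 = L := by simp [birthDeathWeight]
  rw [dif_pos hL, h0] at h
  have hlast : ν ^ (L - 1) ≤ ∑ i : Fin L, birthDeathWeight L ν i := by
    calc ν ^ (L - 1) = birthDeathWeight L ν (L - 1) := by
          simp [birthDeathWeight, Nat.sub_add_cancel hL]
      _ ≤ ∑ i : Fin L, birthDeathWeight L ν i :=
          Finset.single_le_sum (f := fun i : Fin L => birthDeathWeight L ν i)
            (fun i _ => (birthDeathWeight_pos hν i.isLt).le) (Finset.mem_univ ⟨L - 1, by omega⟩)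
  rcases le_total a 0 with ha0 | ha0
  · nlinarith [pow_pos hν (L - 1)]
  · nlinarith

end BirthDeath

lemma tendsto_eigenvalue_div_birthDeathMat {n : ℕ} {α : ℝ → Fin (n + 2) → ℝ}
    (hα : ∀ᶠ ν in atTop, StrictMono (α ν) ∧ (∀ i, 0 < α ν i) ∧
      spectrum ℝ (birthDeathMat (n + 2) ν) = Set.range (α ν)) :
    Tendsto (fun ν => α ν 0 / α ν 1) atTop (𝓝 0) := by
  set L : ℝ := ((n + 2 : ℕ) : ℝ)
  have hbound : ∀ᶠ ν in atTop,
      α ν 0 / α ν 1 ≤ L ^ 2 * (2 * L ^ 2) ^ n / (n + 2)! / ν ^ (n + 2) := by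
    filter_upwards [hα, eventually_ge_atTop 1] with ν ⟨hmono, hpos, hspec⟩ hν
    have hν0 : 0 < ν := one_pos.trans_le hν
    have hprod : ∏ i, α ν i = (n + 2)! := by
      rw [← det_eq_prod_of_spectrum_eq_range hmono.injective hspec, det_birthDeathMat]
    have hle : ∀ i, α ν i ≤ 2 * L ^ 2 * ν := by
      intro i
      calc α ν i ≤ ∑ j, α ν j :=
            Finset.single_le_sum (fun j _ => (hpos j).le) (Finset.mem_univ i)
        _ = (birthDeathMat (n + 2) ν).trace :=
            (trace_eq_sum_of_spectrum_eq_range hmono.injective hspec).symm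
        _ ≤ L ^ 2 * (ν + 1) := trace_birthDeathMat_le hν0.le
        _ ≤ 2 * L ^ 2 * ν := by nlinarith
    have hsmall : α ν 0 * ν ^ (n + 1) ≤ L :=
      mul_pow_le_of_le_spectrum_birthDeathMat (L := n + 2) (by omega) hν0 (by
        rw [hspec]
        rintro _ ⟨i, rfl⟩
        exact hmono.monotone (Fin.zero_le i))
    calc α ν 0 / α ν 1 ≤ α ν 0 ^ 2 * (2 * L ^ 2 * ν) ^ n / ∏ i, α ν i :=
          div_le_sq_mul_pow_div_prod hpos hle
      _ = (α ν 0 * ν ^ (n + 1)) ^ 2 * (2 * L ^ 2) ^ n / (n + 2)! / ν ^ (n + 2) := by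
          rw [hprod]
          field_simp
          ring
      _ ≤ L ^ 2 * (2 * L ^ 2) ^ n / (n + 2)! / ν ^ (n + 2) := by
          gcongr
          exact mul_nonneg (hpos 0).le (pow_nonneg hν0.le _)
  refine tendsto_of_tendsto_of_tendsto_of_le_of_le' tendsto_const_nhds
    (tendsto_const_nhds.div_atTop (tendsto_pow_atTop (by omega))) ?_ hbound
  filter_upwards [hα] with ν ⟨_, hpos, _⟩ using (div_pos (hpos 0) (hpos 1)).le

/-- Let `0 < α_1(ν) < ⋯ < α_L(ν)` denote the (real, distinct, strictly
positive) eigenvalues of `A(ν)`, for `ν > 0`, and let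
`m(ν) := Σ_{i=1}^L 1/α_i(ν)` (the mean escape time `E T_{L,0}(ν)`).  Then
`lim_{ν→∞} α_1(ν)·m(ν) = 1` and `lim_{ν→∞} α_i(ν)·m(ν) = ∞` for `i = 2,…,L`. -/
theorem birthDeathMat_eigenvalue_meanEscape_limits (L : ℕ) (hL : 1 ≤ L)
    (α : ℝ → Fin L → ℝ)
    (hα : ∀ ν : ℝ, 0 < ν → StrictMono (α ν) ∧ (∀ i, 0 < α ν i) ∧
      spectrum ℝ (birthDeathMat L ν) = Set.range (α ν)) :
    Tendsto (fun ν : ℝ => α ν ⟨0, by omega⟩ * ∑ i : Fin L, (α ν i)⁻¹)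
        atTop (nhds 1) ∧
    ∀ i : Fin L, 0 < (i : ℕ) →
      Tendsto (fun ν : ℝ => α ν i * ∑ j : Fin L, (α ν j)⁻¹) atTop atTop := by
  rcases L with _ | _ | n
  · omega
  · refine ⟨tendsto_const_nhds.congr' ?_, fun i hi => by omega⟩
    filter_upwards [eventually_gt_atTop 0] with ν hν
    simp [mul_inv_cancel₀ ((hα ν hν).2.1 0).ne']
  · have hα' := (eventually_gt_atTop 0).mono hα
    obtain ⟨h0, hi⟩ := tendsto_mul_sum_inv
      (hα'.mono fun ν h => ⟨h.1.monotone, h.2.1⟩) (tendsto_eigenvalue_div_birthDeathMat hα')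
    exact ⟨h0, fun i hi' => hi i (by rintro rfl; simp at hi')⟩
end

section
/- Define m(ν) := Σ_{i=1}^{L} 1/α_i(ν). Then for every s ≥ 0, the product Π_{i=1}^{L} (1 + s/(α_i(ν)·m(ν)))^{−1} converges to 1/(1+s) as ν → ∞. (This is the statement that the Laplace transform of the scaled escape time T_{L,0}(ν)/E T_{L,0}(ν) converges pointwise to the Laplace transform of a unit-mean exponential random variable.) -/
/-!
As `ν → ∞`, `A(ν) / ν` tends to the upper triangular matrix of birth rates, whose eigenvalues
are `0, 1, …, L - 1`. Hence for `0 < ε < 1` and `k < L` the characteristic polynomial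
`∏ i, (t - α_i(ν))` eventually has at `t = (k + ε) ν` the sign `(-1)^(L-1-k)` of its limit.
Counting sign changes, exactly one eigenvalue, `α_1(ν)`, lies below `εν`; taking `ε = 1/2`,
all the others exceed `ν / 2`. So `α_1 / α_j → 0` for `j ≥ 2`: the weights
`(α_i m)⁻¹ = α_i⁻¹ / ∑_j α_j⁻¹` concentrate on the smallest eigenvalue, and the
product tends to `(1 + s)⁻¹`.
-/

open Filter

open Finset Topology

theorem neg_one_pow_card_mul_prod_sub_pos {ι : Type*} (s : Finset ι) (β : ι → ℝ) (x : ℝ)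
    (hx : ∀ i ∈ s, β i ≠ x) :
    0 < (-1) ^ #{i ∈ s | x < β i} * ∏ i ∈ s, (x - β i) := by
  rw [← prod_filter_mul_prod_filter_not s (fun i => x < β i)]
  have hneg : ∏ i ∈ s with x < β i, (x - β i) =
      (-1) ^ #{i ∈ s | x < β i} * ∏ i ∈ s with x < β i, (β i - x) := by
    rw [← prod_neg]; simp
  rw [hneg, ← mul_assoc, ← mul_assoc, ← pow_add, ← two_mul, pow_mul, neg_one_sq, one_pow,
    one_mul]
  refine mul_pos (prod_pos fun i hi => ?_) (prod_pos fun i hi => ?_)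
  · simpa using (mem_filter.1 hi).2
  · obtain ⟨hs, hle⟩ := mem_filter.1 hi
    exact sub_pos.2 (lt_of_le_of_ne (not_lt.1 hle) (hx i hs))

theorem mod_two_eq_of_neg_one_pow_mul_pos {a b : ℕ} {P Q : ℝ} (ha : 0 < (-1) ^ a * P)
    (hb : 0 < (-1) ^ b * Q) (hPQ : 0 < P * Q) : a % 2 = b % 2 := by
  rcases Nat.even_or_odd a with h | h <;> rcases Nat.even_or_odd b with h' | h' <;>
    simp only [h.neg_one_pow, h'.neg_one_pow, one_mul, neg_one_mul] at ha hb
  · rw [Nat.even_iff.1 h, Nat.even_iff.1 h']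
  · nlinarith
  · nlinarith
  · rw [Nat.odd_iff.1 h, Nat.odd_iff.1 h']

theorem card_filter_lt_eq_of_mod_two {ι : Type*} [Fintype ι] (β : ι → ℝ) {q : ℕ → ℝ}
    (hq : Monotone q)
    (hpar : ∀ k < Fintype.card ι, #{i | q k < β i} % 2 = (Fintype.card ι - 1 - k) % 2) :
    #{i | q 0 < β i} = Fintype.card ι - 1 := by
  set n := Fintype.card ι
  set N : ℕ → ℕ := fun k => #{i | q k < β i}
  replace hpar : ∀ k < n, N k % 2 = (n - 1 - k) % 2 := hpar
  have hanti : Antitone N := fun k k' hkk' =>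
    card_le_card <| monotone_filter_right _ fun i _ hi => (hq hkk').trans_lt hi
  -- `N` drops by at least one at each step, since consecutive values have different parities
  have hlow : ∀ j < n, j ≤ N (n - 1 - j) := by
    intro j
    induction j with
    | zero => intro _; exact Nat.zero_le _
    | succ j ih =>
      intro hj
      have h₁ := hpar (n - 1 - (j + 1)) (by omega)
      have h₂ := hpar (n - 1 - j) (by omega)
      have hle := hanti (show n - 1 - (j + 1) ≤ n - 1 - j by omega)
      have := ih (by omega)
      omega
  have hN0 : N 0 ≤ n := card_filter_le _ _
  have hN0' : n - 1 ≤ N 0 := by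
    rcases Nat.eq_zero_or_pos n with hn | hn
    · omega
    · simpa using hlow (n - 1) (by omega)
  have := hpar 0
  show N 0 = n - 1
  omega

theorem StrictMono.apply_zero_le_and_lt_of_card_filter_lt {L : ℕ} [NeZero L]
    {β : Fin L → ℝ} (hβ : StrictMono β) {x : ℝ} (hcard : #{i | x < β i} = L - 1) :
    β 0 ≤ x ∧ ∀ i ≠ 0, x < β i := by
  have hcompl : #{i | ¬ x < β i} = 1 := by
    have := card_filter_add_card_filter_not (s := univ) (fun i : Fin L => x < β i)
    simp only [card_univ, Fintype.card_fin] at this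
    have := NeZero.pos L
    omega
  obtain ⟨j, hj⟩ := card_pos.1 (hcompl ▸ Nat.one_pos)
  have h0 : β 0 ≤ x := (hβ.monotone (Fin.zero_le j)).trans (not_lt.1 (mem_filter.1 hj).2)
  refine ⟨h0, fun i hi => ?_⟩
  by_contra hxi
  exact hi (card_le_one.1 hcompl.le i (by simpa using hxi) 0 (by simpa using h0))

theorem natCast_sub_succ_ne_add (L k : ℕ) {ε : ℝ} (hε₀ : 0 < ε) (hε₁ : ε < 1)
    (i : Fin L) :
    (L : ℝ) - ((i : ℕ) + 1) ≠ k + ε := by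
  intro h
  have hm : ((L - (i + 1) : ℕ) : ℝ) = k + ε := by
    rw [Nat.cast_sub (by omega)]; push_cast; linarith
  have h₁ : k < L - (i + 1) := by
    exact_mod_cast (show (k : ℝ) < (L - (i + 1) : ℕ) by linarith)
  have h₂ : L - (i + 1) < k + 1 := by
    exact_mod_cast (show ((L - (i + 1) : ℕ) : ℝ) < k + 1 by linarith)
  omega

theorem card_filter_add_lt_sub (L k : ℕ) {ε : ℝ} (hε₀ : 0 < ε) (hε₁ : ε < 1) :
    #{i : Fin L | k + ε < (L : ℝ) - ((i : ℕ) + 1)} = L - 1 - k := by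
  have hiff : ∀ i : Fin L, k + ε < (L : ℝ) - ((i : ℕ) + 1) ↔ (i : ℕ) < L - 1 - k := by
    intro i
    constructor
    · intro h
      have : ((k + i + 1 : ℕ) : ℝ) < L := by push_cast; linarith
      have := Nat.cast_lt.1 this
      omega
    · intro h
      have : ((k + i + 2 : ℕ) : ℝ) ≤ L := Nat.cast_le.2 (by omega)
      push_cast at this
      linarith
  rw [filter_congr fun i _ => hiff i, Fin.card_filter_val_lt]
  omega

theorem Matrix.det_scalar_sub_eq_prod {n K : Type*} [Fintype n] [DecidableEq n] [Field K]
    (A : Matrix n n K) (β : n → K) (hβ : Function.Injective β)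
    (hspec : ∀ i, β i ∈ spectrum K A) (t : K) :
    (Matrix.scalar n t - A).det = ∏ i, (t - β i) := by
  have hle : univ.val.map β ≤ A.charpoly.roots := by
    rw [Multiset.le_iff_subset (univ.nodup.map hβ)]
    intro r hr
    obtain ⟨i, -, rfl⟩ := Multiset.mem_map.1 hr
    rw [Polynomial.mem_roots A.charpoly_monic.ne_zero]
    exact Matrix.mem_spectrum_iff_isRoot_charpoly.1 (hspec i)
  have hcard : Multiset.card A.charpoly.roots = A.charpoly.natDegree :=
    le_antisymm (Polynomial.card_roots' _) <| by
      simpa [A.charpoly_natDegree_eq_dim] using Multiset.card_le_card hle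
  have hroots : A.charpoly.roots = univ.val.map β :=
    (Multiset.eq_of_le_of_card_le hle (by simp [hcard, A.charpoly_natDegree_eq_dim])).symm
  rw [← Matrix.eval_charpoly, ← Polynomial.prod_multiset_X_sub_C_of_monic_of_roots_card_eq
    A.charpoly_monic hcard, hroots]
  simp [Polynomial.eval_prod]

theorem Matrix.eventually_pos_det_mul_det_smul_sub {n : Type*} [Fintype n] [DecidableEq n]
    (M C : Matrix n n ℝ) (hM : M.det ≠ 0) :
    ∀ᶠ ν : ℝ in atTop, 0 < M.det * (ν • M - C).det := by
  have hlim :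
      Tendsto (fun ν : ℝ => M.det * (M - ν⁻¹ • C).det) atTop (𝓝 (M.det * M.det)) := by
    have hcont : Continuous fun t : ℝ => M.det * (M - t • C).det := by fun_prop
    have := (hcont.tendsto 0).comp tendsto_inv_atTop_zero
    rwa [zero_smul, sub_zero] at this
  filter_upwards [hlim.eventually (eventually_gt_nhds (mul_self_pos.2 hM)),
    eventually_gt_atTop 0] with ν hpos hν
  have hscale : ν • M - C = ν • (M - ν⁻¹ • C) := by
    rw [smul_sub, smul_smul, mul_inv_cancel₀ hν.ne', one_smul]
  rw [hscale, Matrix.det_smul, mul_left_comm]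
  exact mul_pos (pow_pos hν _) hpos

theorem tendsto_inv_mul_sum_inv {ι X : Type*} [Fintype ι] [DecidableEq ι] {l : Filter X}
    {a : X → ι → ℝ} {i₀ : ι} (ha : ∀ᶠ x in l, a x i₀ ≠ 0)
    (hratio : ∀ j ≠ i₀, Tendsto (fun x => a x i₀ / a x j) l (𝓝 0)) (i : ι) :
    Tendsto (fun x => (a x i * ∑ j, (a x j)⁻¹)⁻¹) l (𝓝 (if i = i₀ then 1 else 0)) := by
  have hr : ∀ j, Tendsto (fun x => a x i₀ / a x j) l (𝓝 (if j = i₀ then 1 else 0)) := by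
    intro j
    by_cases hj : j = i₀
    · subst hj
      simp only [if_true]
      exact tendsto_const_nhds.congr' (ha.mono fun x hx => (div_self hx).symm)
    · simpa [hj] using hratio j hj
  have hsum := tendsto_finsetSum univ fun j _ => hr j
  rw [sum_ite_eq' univ i₀, if_pos (mem_univ _)] at hsum
  refine ((hr i).div hsum one_ne_zero).congr' ?_ |>.trans (by rw [div_one])
  filter_upwards [ha] with x hx
  simp only [Pi.div_apply, div_eq_mul_inv, ← mul_sum, mul_inv]
  field_simp

def birthRateMat (L : ℕ) : Matrix (Fin L) (Fin L) ℝ :=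
  Matrix.of fun i j =>
    if j = i then (L : ℝ) - ((i : ℕ) + 1)
    else if (j : ℕ) = (i : ℕ) + 1 then -((L : ℝ) - ((i : ℕ) + 1))
    else 0

def deathRateMat (L : ℕ) : Matrix (Fin L) (Fin L) ℝ :=
  Matrix.of fun i j =>
    if j = i then (i : ℕ) + 1
    else if (j : ℕ) + 1 = (i : ℕ) then -(((i : ℕ) + 1 : ℝ))
    else 0

theorem birthDeathMat_eq_smul_add (L : ℕ) (ν : ℝ) :
    birthDeathMat L ν = ν • birthRateMat L + deathRateMat L := by
  ext i j
  simp only [birthDeathMat, birthRateMat, deathRateMat, Matrix.of_apply, Matrix.add_apply,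
    Matrix.smul_apply, smul_eq_mul]
  split_ifs <;> first | omega | ring

theorem birthRateMat_isUpperTriangular (L : ℕ) : (birthRateMat L).IsUpperTriangular := by
  intro i j (hji : (j : ℕ) < i)
  simp [birthRateMat, show (j : ℕ) ≠ i + 1 by omega, show j ≠ i by omega]

theorem det_scalar_sub_birthRateMat (L : ℕ) (x : ℝ) :
    (Matrix.scalar (Fin L) x - birthRateMat L).det =
      ∏ i : Fin L, (x - ((L : ℝ) - ((i : ℕ) + 1))) := by
  rw [Matrix.scalar_apply, Matrix.det_of_isUpperTriangular
    ((Matrix.blockTriangular_diagonal fun _ => x).sub (birthRateMat_isUpperTriangular L))]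
  simp [birthRateMat]

theorem scalar_mul_sub_birthDeathMat (L : ℕ) (x ν : ℝ) :
    Matrix.scalar (Fin L) (x * ν) - birthDeathMat L ν =
      ν • (Matrix.scalar (Fin L) x - birthRateMat L) - deathRateMat L := by
  rw [birthDeathMat_eq_smul_add, smul_sub, sub_sub, Matrix.smul_eq_diagonal_mul]
  congr 1
  ext i j
  simp [Matrix.scalar_apply, Matrix.diagonal_apply, mul_comm]

section Eigenvalues

variable {L : ℕ} {α : ℝ → Fin L → ℝ}

theorem eventually_card_eigenvalues_gt_mod_two
    (hmono : ∀ ν > 0, StrictMono (α ν))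
    (hspec : ∀ ν > 0, ∀ i, α ν i ∈ spectrum ℝ (birthDeathMat L ν))
    (k : ℕ) {ε : ℝ} (hε₀ : 0 < ε) (hε₁ : ε < 1) :
    ∀ᶠ ν in atTop, #{i | (k + ε) * ν < α ν i} % 2 = (L - 1 - k) % 2 := by
  have hlim := neg_one_pow_card_mul_prod_sub_pos univ
    (fun i : Fin L => (L : ℝ) - ((i : ℕ) + 1)) (k + ε) fun i _ =>
      natCast_sub_succ_ne_add L k hε₀ hε₁ i
  rw [← det_scalar_sub_birthRateMat, card_filter_add_lt_sub L k hε₀ hε₁] at hlim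
  filter_upwards [Matrix.eventually_pos_det_mul_det_smul_sub _ (deathRateMat L)
    (right_ne_zero_of_mul hlim.ne'), eventually_gt_atTop 0] with ν hpos hν
  rw [← scalar_mul_sub_birthDeathMat, Matrix.det_scalar_sub_eq_prod _ _ (hmono ν hν).injective
    (hspec ν hν)] at hpos
  have hroots : ∀ i ∈ univ, α ν i ≠ (k + ε) * ν := fun i _ h =>
    (prod_ne_zero_iff.1 (right_ne_zero_of_mul hpos.ne')) i (mem_univ i) (sub_eq_zero.2 h.symm)
  exact mod_two_eq_of_neg_one_pow_mul_pos (neg_one_pow_card_mul_prod_sub_pos univ _ _ hroots)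
    hlim (by rwa [mul_comm])

theorem eventually_eigenvalue_zero_le_and_lt [NeZero L]
    (hmono : ∀ ν > 0, StrictMono (α ν))
    (hspec : ∀ ν > 0, ∀ i, α ν i ∈ spectrum ℝ (birthDeathMat L ν))
    {ε : ℝ} (hε₀ : 0 < ε) (hε₁ : ε < 1) :
    ∀ᶠ ν in atTop, α ν 0 ≤ ε * ν ∧ ∀ i ≠ 0, ε * ν < α ν i := by
  have hpar := (eventually_all_finset (range L)).2 fun k _ =>
    eventually_card_eigenvalues_gt_mod_two hmono hspec k hε₀ hε₁
  filter_upwards [hpar, eventually_gt_atTop 0] with ν hpar hν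
  have hq : Monotone fun k : ℕ => (k + ε) * ν := fun k k' h =>
    mul_le_mul_of_nonneg_right (add_le_add_left (Nat.cast_le.2 h) ε) hν.le
  have := card_filter_lt_eq_of_mod_two (α ν) hq
    (by simpa using fun k hk => hpar k (mem_range.2 hk))
  exact (hmono ν hν).apply_zero_le_and_lt_of_card_filter_lt (by simpa using this)

theorem tendsto_eigenvalue_zero_div_eigenvalue [NeZero L]
    (hmono : ∀ ν > 0, StrictMono (α ν))
    (hspec : ∀ ν > 0, ∀ i, α ν i ∈ spectrum ℝ (birthDeathMat L ν))
    (hpos : ∀ ν > 0, 0 < α ν 0) {j : Fin L} (hj : j ≠ 0) :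
    Tendsto (fun ν => α ν 0 / α ν j) atTop (𝓝 0) := by
  rw [Metric.tendsto_nhds]
  intro δ hδ
  filter_upwards [eventually_eigenvalue_zero_le_and_lt hmono hspec (ε := min (δ / 3) (1 / 2))
    (by positivity) (by linarith [min_le_right (δ / 3) (1 / 2)]),
    eventually_eigenvalue_zero_le_and_lt hmono hspec (ε := 1 / 2) (by norm_num) (by norm_num),
    eventually_gt_atTop 0] with ν ⟨h₀, _⟩ ⟨_, hgap⟩ hν
  have hαj := hgap j hj
  have hαj' : 0 < α ν j := by linarith
  rw [Real.dist_0_eq_abs, abs_of_pos (div_pos (hpos ν hν) hαj'), div_lt_iff₀ hαj']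
  calc α ν 0 ≤ min (δ / 3) (1 / 2) * ν := h₀
    _ ≤ δ / 3 * ν := by gcongr; exact min_le_left _ _
    _ < δ * (1 / 2 * ν) := by nlinarith
    _ < δ * α ν j := by gcongr

end Eigenvalues

/-- Let `0 < α_1(ν) < ⋯ < α_L(ν)` denote the (real, distinct, strictly
positive) eigenvalues of `A(ν)`, for `ν > 0`, and let
`m(ν) := Σ_{i=1}^L 1/α_i(ν)`.  Then for every `s ≥ 0`,
`Π_{i=1}^L (1 + s/(α_i(ν)·m(ν)))⁻¹ → 1/(1+s)` as `ν → ∞`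
(pointwise convergence of the Laplace transform of the scaled escape time to
that of a unit-mean exponential random variable). -/
theorem birthDeathMat_laplace_transform_limit (L : ℕ) (hL : 1 ≤ L)
    (α : ℝ → Fin L → ℝ)
    (hα : ∀ ν : ℝ, 0 < ν → StrictMono (α ν) ∧ (∀ i, 0 < α ν i) ∧
      spectrum ℝ (birthDeathMat L ν) = Set.range (α ν)) :
    ∀ s : ℝ, 0 ≤ s →
      Tendsto
        (fun ν : ℝ =>
          ∏ i : Fin L, (1 + s / (α ν i * ∑ j : Fin L, (α ν j)⁻¹))⁻¹)
        atTop (nhds (1 / (1 + s))) := by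
  intro s hs
  have : NeZero L := ⟨by omega⟩
  have hmono : ∀ ν > 0, StrictMono (α ν) := fun ν hν => (hα ν hν).1
  have hspec : ∀ ν > 0, ∀ i, α ν i ∈ spectrum ℝ (birthDeathMat L ν) := fun ν hν i =>
    (hα ν hν).2.2 ▸ Set.mem_range_self i
  have hpos : ∀ ν > 0, 0 < α ν 0 := fun ν hν => (hα ν hν).2.1 0
  have hweight :=
    tendsto_inv_mul_sum_inv ((eventually_gt_atTop 0).mono fun ν hν => (hpos ν hν).ne')
      fun j hj => tendsto_eigenvalue_zero_div_eigenvalue hmono hspec hpos hj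
  have hfactor : ∀ i : Fin L, Tendsto (fun ν => (1 + s / (α ν i * ∑ j, (α ν j)⁻¹))⁻¹)
      atTop (𝓝 (if i = 0 then (1 + s)⁻¹ else 1)) := fun i => by
    have := ((hweight i).const_mul s).const_add 1
    split_ifs at this ⊢
    · simpa [div_eq_mul_inv] using this.inv₀ (by positivity)
    · simpa [div_eq_mul_inv] using this.inv₀ (by simp)
  simpa [Fintype.prod_ite_eq'] using tendsto_finsetProd univ fun i _ => hfactor i
end

section
/- Let d ≥ 1 be an integer, let λ_1, …, λ_{d−1} > 0 and μ_1, …, μ_d > 0, and set λ_d := 0. Let A be the d×d real matrix with A_{i,i} = λ_i + μ_i for 1 ≤ i ≤ d, A_{i,i+1} = −λ_i for 1 ≤ i ≤ d−1, A_{i+1,i} = −μ_{i+1} for 1 ≤ i ≤ d−1, and all other entries zero (A is the negative of the generator, restricted to the transient states {1,…,d}, of a birth–death process on {0,1,…,d} with birth rates λ_i, death rates μ_i, and absorbing state 0). Then A is invertible and the sum of the entries of the row of A^{−1} indexed by d equals the trace of A^{−1}: Σ_{j=1}^{d} (A^{−1})_{d,j} = tr(A^{−1}). (This is the mean version of the Karlin–McGregor/Keilson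 theorem: the expected absorption time started from state d equals the sum of the reciprocals of the eigenvalues of A.) -/
/-- The `d×d` matrix of a birth–death process on `{0,1,…,d}` with birth rates
`λ_i`, death rates `μ_i` and absorbing state `0`, restricted (and negated) to
the transient states `{1,…,d}`.  Index `i : Fin d` represents state `i + 1`. -/
noncomputable def bdAbsorbMat (d : ℕ) (lam mu : Fin d → ℝ) :
    Matrix (Fin d) (Fin d) ℝ :=
  Matrix.of fun i j =>
    if j = i then lam i + mu i
    else if (j : ℕ) = (i : ℕ) + 1 then -lam i
    else if (i : ℕ) = (j : ℕ) + 1 then -mu i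
    else 0

/-!
Put a vector `x` on the states `1, …, d` and set `x₀ = 0` at the absorbing state. Then
`(A x)_s = μ_s (x_s - x_{s-1}) - λ_s (x_{s+1} - x_s)`. Since `λ_d = 0`, if `A x` vanishes at all
states above `m`, then descending from `d` every increment `x_s - x_{s-1}` with `s > m` vanishes, so
`x` is constant on `{m, …, d}`. With `m = 0` this makes `A` injective. The `j`-th column of
`A A⁻¹ = 1` vanishes below row `j`, so the `j`-th column of `A⁻¹` is constant from state `j` on:
`(A⁻¹)_{d,j} = (A⁻¹)_{j,j}`. Summing over `j` gives the trace.
-/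

open Matrix Finset

/-- `x` placed on the states `1, …, d`; the states `0` and `d + 1` carry `0`. -/
def statesExt {α : Type*} [Zero α] {d : ℕ} (x : Fin d → α) (s : ℕ) : α :=
  if h : 0 < s ∧ s ≤ d then x ⟨s - 1, by omega⟩ else 0

section statesExt

variable {α : Type*} {d : ℕ}

@[simp]
lemma statesExt_zero [Zero α] (x : Fin d → α) : statesExt x 0 = 0 := by
  simp [statesExt]

lemma statesExt_of_pos_of_le [Zero α] (x : Fin d → α) {s : ℕ} (h0 : 0 < s) (hs : s ≤ d) :
    statesExt x s = x ⟨s - 1, by omega⟩ :=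
  dif_pos ⟨h0, hs⟩

@[simp]
lemma statesExt_val_add_one [Zero α] (x : Fin d → α) (i : Fin d) :
    statesExt x (i + 1) = x i := by
  rw [statesExt_of_pos_of_le (s := i + 1) x (Nat.succ_pos i) i.isLt]
  exact congrArg x (Fin.ext (Nat.add_sub_cancel _ _))

lemma sum_ite_val_add_one_eq_statesExt [AddCommMonoid α] (x : Fin d → α) (s : ℕ) :
    ∑ k : Fin d, (if (k : ℕ) + 1 = s then x k else 0) = statesExt x s := by
  by_cases hs : 0 < s ∧ s ≤ d
  · rw [statesExt_of_pos_of_le x hs.1 hs.2,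
      sum_eq_single_of_mem ⟨s - 1, by omega⟩ (mem_univ _)]
    · rw [if_pos (by simp; omega)]
    · exact fun k _ hk => if_neg fun h => hk (Fin.ext (by simp; omega))
  · rw [statesExt, dif_neg hs]
    exact sum_eq_zero fun k _ => if_neg (by omega)

end statesExt

lemma eq_of_balance {R : Type*} [Ring R] [NoZeroDivisors R] {L M X : ℕ → R} {m n : ℕ}
    (hM : ∀ s, m < s → s ≤ n → M s ≠ 0) (hL : L n = 0)
    (hbal : ∀ s, m < s → s ≤ n → M s * (X s - X (s - 1)) = L s * (X (s + 1) - X s))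
    {s : ℕ} (hms : m ≤ s) (hsn : s ≤ n) : X s = X m := by
  have hstep : ∀ s, m < s → s ≤ n → X s = X (s - 1) := by
    intro s hms hsn
    induction hsn using Nat.decreasingInduction with
    | self =>
      have := hbal n hms le_rfl
      rw [hL, zero_mul, mul_eq_zero] at this
      exact sub_eq_zero.mp (this.resolve_left (hM n hms le_rfl))
    | of_succ k hk ih =>
      have := hbal k hms hk.le
      rw [ih (by omega), Nat.add_sub_cancel, sub_self, mul_zero, mul_eq_zero] at this
      exact sub_eq_zero.mp (this.resolve_left (hM k hms hk.le))
  induction s, hms using Nat.le_induction with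
  | base => rfl
  | succ k hmk ih => rw [hstep (k + 1) (by omega) hsn, Nat.add_sub_cancel, ih (by omega)]

section bdAbsorbMat

variable {d : ℕ} {lam mu : Fin d → ℝ}

lemma bdAbsorbMat_mulVec_apply (x : Fin d → ℝ) (i : Fin d) :
    (bdAbsorbMat d lam mu *ᵥ x) i =
      statesExt mu (i + 1) * (statesExt x (i + 1) - statesExt x i)
        - statesExt lam (i + 1) * (statesExt x (i + 2) - statesExt x (i + 1)) := by
  have hentry : ∀ k : Fin d, bdAbsorbMat d lam mu i k * x k =
      (lam i + mu i) * (if (k : ℕ) + 1 = i + 1 then x k else 0)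
        - lam i * (if (k : ℕ) + 1 = i + 2 then x k else 0)
        - mu i * (if (k : ℕ) + 1 = i then x k else 0) := by
    intro k
    simp only [bdAbsorbMat, of_apply, Fin.ext_iff]
    split_ifs <;> first | omega | ring
  simp only [mulVec, dotProduct, hentry, sum_sub_distrib, ← mul_sum,
    sum_ite_val_add_one_eq_statesExt, statesExt_val_add_one]
  ring

lemma statesExt_eq_of_bdAbsorbMat_mulVec_eq_zero (hlam : statesExt lam d = 0)
    (hmu : ∀ i, mu i ≠ 0) {x : Fin d → ℝ} {m : ℕ}
    (hx : ∀ i : Fin d, m ≤ i → (bdAbsorbMat d lam mu *ᵥ x) i = 0)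
    {s : ℕ} (hms : m ≤ s) (hsd : s ≤ d) : statesExt x s = statesExt x m := by
  have hstate : ∀ s, 0 < s → s ≤ d → ∃ i : Fin d, (i : ℕ) + 1 = s :=
    fun s h0 hs => ⟨⟨s - 1, by omega⟩, by simp; omega⟩
  refine eq_of_balance (L := statesExt lam) (M := statesExt mu) (fun s hs hsd => ?_) hlam
    (fun s hs hsd => ?_) hms hsd
  · obtain ⟨i, rfl⟩ := hstate s (by omega) hsd
    simpa using hmu i
  · obtain ⟨i, rfl⟩ := hstate s (by omega) hsd
    have := hx i (by omega)
    rw [bdAbsorbMat_mulVec_apply, sub_eq_zero] at this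
    simpa [add_assoc] using this

lemma isUnit_det_bdAbsorbMat (hlam : statesExt lam d = 0) (hmu : ∀ i, mu i ≠ 0) :
    IsUnit (bdAbsorbMat d lam mu).det := by
  rw [isUnit_iff_ne_zero, Ne, ← exists_mulVec_eq_zero_iff]
  rintro ⟨x, hx0, hx⟩
  refine hx0 (funext fun i => ?_)
  simpa using statesExt_eq_of_bdAbsorbMat_mulVec_eq_zero hlam hmu (m := 0)
    (fun i _ => congrFun hx i) (Nat.zero_le (i + 1)) i.isLt

lemma bdAbsorbMat_inv_apply_of_le (hlam : statesExt lam d = 0) (hmu : ∀ i, mu i ≠ 0)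
    {i j : Fin d} (hij : j ≤ i) :
    (bdAbsorbMat d lam mu)⁻¹ i j = (bdAbsorbMat d lam mu)⁻¹ j j := by
  set A := bdAbsorbMat d lam mu
  have hcol : ∀ k : Fin d, j < k → (A *ᵥ fun l => A⁻¹ l j) k = 0 := fun k hjk => by
    change (A * A⁻¹) k j = 0
    rw [mul_nonsing_inv A (isUnit_det_bdAbsorbMat hlam hmu), one_apply_ne hjk.ne']
  simpa using statesExt_eq_of_bdAbsorbMat_mulVec_eq_zero hlam hmu (m := j + 1) hcol
    (Nat.succ_le_succ hij) i.isLt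

end bdAbsorbMat

/-- Karlin–McGregor/Keilson, mean version.  Let `d ≥ 1`, let
`λ_1,…,λ_{d−1} > 0`, `μ_1,…,μ_d > 0` and `λ_d = 0`, and let `A` be the
tridiagonal matrix with `A_{i,i} = λ_i + μ_i`, `A_{i,i+1} = −λ_i`,
`A_{i+1,i} = −μ_{i+1}`.  Then `A` is invertible and the sum of the entries of
the last row of `A⁻¹` equals the trace of `A⁻¹`:
`Σ_{j=1}^d (A⁻¹)_{d,j} = tr(A⁻¹)` (the expected absorption time from state `d`
equals the sum of the reciprocals of the eigenvalues of `A`). -/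
theorem bdAbsorbMat_mean_absorption_eq_trace_inv (d : ℕ) (hd : 1 ≤ d)
    (lam mu : Fin d → ℝ)
    (hlamLast : lam ⟨d - 1, by omega⟩ = 0)
    (hmu : ∀ i, 0 < mu i) :
    IsUnit (bdAbsorbMat d lam mu).det ∧
      ∑ j : Fin d, (bdAbsorbMat d lam mu)⁻¹ ⟨d - 1, by omega⟩ j =
        Matrix.trace (bdAbsorbMat d lam mu)⁻¹ := by
  have hlam : statesExt lam d = 0 := by
    rwa [statesExt_of_pos_of_le lam hd le_rfl]
  have hmu' : ∀ i, mu i ≠ 0 := fun i => (hmu i).ne'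
  refine ⟨isUnit_det_bdAbsorbMat hlam hmu', sum_congr rfl fun j _ => ?_⟩
  exact bdAbsorbMat_inv_apply_of_le hlam hmu' (Nat.le_sub_one_of_lt j.isLt)
end

section
/- Fix integers L₁ ≥ 1, L₂ ≥ 1. For states l ∈ {−L₁, …, −1, 0, 1, …, L₂} define weights w_{−l} := C(L₁,l)·ν^l for 1 ≤ l ≤ L₁, w_0 := 1, and w_m := C(L₂,m)·ν^m for 1 ≤ m ≤ L₂, and define upward rates q(l, l+1) := |l| if −L₁ ≤ l < 0 and q(l, l+1) := (L₂−l)ν if 0 ≤ l < L₂. For −L₁ ≤ l < L₂ let m_l(ν) := (1/q(l,l+1)) · Σ_{n=−L₁}^{l} (w_n/w_l) (this is the expected transition time from state l to state l+1 of the bipartite birth–death chain). Then for any 0 < l₁ ≤ L₁ and 0 < l₂ ≤ L₂, the expected transition time from −l₁ to l₂, namely Σ_{l=−l₁}^{l₂−1} m_l(ν), satisfies Σ_{l=−l₁}^{l₂−1} m_l(ν) ~ ((L₁+L₂)/(L₁·L₂)) · ν^{L₁−1} as ν → ∞. -/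
open Filter Finset

/-- Stationary weights of the bipartite birth–death chain on
`{−L₁,…,−1,0,1,…,L₂}`:  `w_{−l} = C(L₁,l) ν^l` for `1 ≤ l ≤ L₁`, `w_0 = 1`,
and `w_m = C(L₂,m) ν^m` for `1 ≤ m ≤ L₂`. -/
noncomputable def bipWeight (L₁ L₂ : ℕ) (ν : ℝ) (l : ℤ) : ℝ :=
  if l < 0 then (L₁.choose l.natAbs : ℝ) * ν ^ l.natAbs
  else (L₂.choose l.toNat : ℝ) * ν ^ l.toNat

/-- Upward rates of the bipartite birth–death chain:
`q(l,l+1) = |l|` for `l < 0` and `q(l,l+1) = (L₂−l)ν` for `l ≥ 0`. -/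
noncomputable def bipUpRate (L₂ : ℕ) (ν : ℝ) (l : ℤ) : ℝ :=
  if l < 0 then (l.natAbs : ℝ) else ((L₂ : ℝ) - (l : ℝ)) * ν

/-- Expected transition time from state `l` to state `l+1` of the bipartite
birth–death chain:  `m_l(ν) = (1/q(l,l+1)) · Σ_{n=−L₁}^{l} w_n/w_l`. -/
noncomputable def bipMeanUpTime (L₁ L₂ : ℕ) (ν : ℝ) (l : ℤ) : ℝ :=
  (1 / bipUpRate L₂ ν l) *
    ∑ n ∈ Finset.Icc (-(L₁ : ℤ)) l, bipWeight L₁ L₂ ν n / bipWeight L₁ L₂ ν l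
/-
Every weight and rate is a monomial in `ν`: `w_n = w_n(1) ν^{|n|}` and
`q(l,l+1) = q(l,l+1)|_{ν=1} ν^{[l ≥ 0]}`. Hence each summand `w_n / (w_l q(l,l+1))` of `m_l` is a
monomial of degree `|n| - |l| - [l ≥ 0] ≤ L₁ - 1`, with equality only for `n = −L₁` and
`l ∈ {−1, 0}`. So `m_{−1} ~ ν^{L₁−1}/L₁`, `m_0 ~ ν^{L₁−1}/L₂`, every other `m_l` is `o(ν^{L₁−1})`,
and `1/L₁ + 1/L₂ = (L₁+L₂)/(L₁L₂)`.
-/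

open Topology

theorem tendsto_mul_pow_div_pow_atTop (a : ℝ) {j k : ℕ} (hjk : j ≤ k) :
    Tendsto (fun x : ℝ => a * x ^ j / x ^ k) atTop (𝓝 (if j = k then a else 0)) := by
  split_ifs with hj
  · subst hj
    refine tendsto_const_nhds.congr' ?_
    filter_upwards [eventually_ne_atTop 0] with x hx
    rw [mul_div_cancel_right₀ _ (pow_ne_zero _ hx)]
  · have hlim : Tendsto (fun x : ℝ => a * (x ^ (k - j))⁻¹) atTop (𝓝 (a * 0)) :=
      (tendsto_inv_atTop_zero.comp (tendsto_pow_atTop (by omega))).const_mul a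
    rw [mul_zero] at hlim
    refine hlim.congr' ?_
    filter_upwards [eventually_ne_atTop 0] with x hx
    rw [← pow_sub_mul_pow x hjk]
    field_simp

section BipartiteChain

variable {L₁ L₂ : ℕ}

theorem bipWeight_eq_mul_pow (ν : ℝ) (n : ℤ) :
    bipWeight L₁ L₂ ν n = bipWeight L₁ L₂ 1 n * ν ^ n.natAbs := by
  unfold bipWeight
  split_ifs with hn
  · simp
  · obtain ⟨m, rfl⟩ := Int.eq_ofNat_of_zero_le (not_lt.mp hn)
    simp

theorem bipUpRate_eq_mul_pow (ν : ℝ) (l : ℤ) :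
    bipUpRate L₂ ν l = bipUpRate L₂ 1 l * ν ^ (if l < 0 then 0 else 1) := by
  unfold bipUpRate
  split_ifs <;> simp

noncomputable def bipLeadingCoeff (L₁ L₂ : ℕ) (l : ℤ) : ℝ :=
  if l = -1 then (L₁ : ℝ)⁻¹ else if l = 0 then (L₂ : ℝ)⁻¹ else 0

theorem tendsto_bipWeight_div_div_bipUpRate (hL₁ : 1 ≤ L₁) {l n : ℤ}
    (hn : -(L₁ : ℤ) ≤ n) (hnl : n ≤ l) :
    Tendsto (fun ν : ℝ =>
        bipWeight L₁ L₂ ν n / bipWeight L₁ L₂ ν l / bipUpRate L₂ ν l / ν ^ (L₁ - 1)) atTop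
      (𝓝 (if n = -(L₁ : ℤ) then bipLeadingCoeff L₁ L₂ l else 0)) := by
  have hdeg : n.natAbs ≤ l.natAbs + (if l < 0 then 0 else 1) + (L₁ - 1) := by
    split_ifs <;> omega
  have hlead : n.natAbs = l.natAbs + (if l < 0 then 0 else 1) + (L₁ - 1) ↔
      n = -(L₁ : ℤ) ∧ (l = -1 ∨ l = 0) := by
    split_ifs <;> omega
  convert tendsto_mul_pow_div_pow_atTop
    (bipWeight L₁ L₂ 1 n / (bipWeight L₁ L₂ 1 l * bipUpRate L₂ 1 l)) hdeg using 2 with ν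
  · rw [bipWeight_eq_mul_pow ν n, bipWeight_eq_mul_pow ν l, bipUpRate_eq_mul_pow ν l, pow_add,
      pow_add]
    ring
  · by_cases h : n = -(L₁ : ℤ) ∧ (l = -1 ∨ l = 0)
    · rw [if_pos (hlead.mpr h)]
      obtain ⟨rfl, rfl | rfl⟩ := h <;> simp [bipWeight, bipUpRate, bipLeadingCoeff]
    · rw [if_neg (hlead.not.mpr h), bipLeadingCoeff]
      split_ifs <;> simp_all

theorem tendsto_bipMeanUpTime_div_pow (hL₁ : 1 ≤ L₁) {l : ℤ} (hl : -(L₁ : ℤ) ≤ l) :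
    Tendsto (fun ν : ℝ => bipMeanUpTime L₁ L₂ ν l / ν ^ (L₁ - 1)) atTop
      (𝓝 (bipLeadingCoeff L₁ L₂ l)) := by
  have hsum := tendsto_finsetSum (Icc (-(L₁ : ℤ)) l) fun n hn =>
    tendsto_bipWeight_div_div_bipUpRate (L₂ := L₂) hL₁ (mem_Icc.mp hn).1 (mem_Icc.mp hn).2
  rw [sum_ite_eq', if_pos (mem_Icc.mpr ⟨le_rfl, hl⟩)] at hsum
  refine hsum.congr fun ν => ?_
  rw [bipMeanUpTime, mul_sum, sum_div]
  refine sum_congr rfl fun n _ => ?_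
  ring

theorem sum_bipLeadingCoeff {a b : ℤ} (ha : a ≤ -1) (hb : 0 ≤ b) :
    ∑ l ∈ Icc a b, bipLeadingCoeff L₁ L₂ l = (L₁ : ℝ)⁻¹ + (L₂ : ℝ)⁻¹ := by
  rw [sum_eq_add_of_mem (-1) 0 (mem_Icc.mpr ⟨ha, by omega⟩) (mem_Icc.mpr ⟨by omega, hb⟩)
    (by norm_num) fun l _ hl => by simp [bipLeadingCoeff, hl.1, hl.2]]
  simp [bipLeadingCoeff]

end BipartiteChain

/-- For `0 < l₁ ≤ L₁` and `0 < l₂ ≤ L₂`, the expected transition time from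
`−l₁` to `l₂`, namely `Σ_{l=−l₁}^{l₂−1} m_l(ν)`, satisfies
`Σ_{l=−l₁}^{l₂−1} m_l(ν) ~ ((L₁+L₂)/(L₁·L₂)) · ν^{L₁−1}` as `ν → ∞`. -/
theorem bipartite_meanTransitionTime_asymptotics (L₁ L₂ : ℕ)
    (hL₁ : 1 ≤ L₁) (hL₂ : 1 ≤ L₂) :
    ∀ l₁ l₂ : ℕ, 0 < l₁ → l₁ ≤ L₁ → 0 < l₂ → l₂ ≤ L₂ →
      Tendsto
        (fun ν : ℝ =>
          (∑ l ∈ Finset.Icc (-(l₁ : ℤ)) ((l₂ : ℤ) - 1), bipMeanUpTime L₁ L₂ ν l) /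
            ((((L₁ : ℝ) + (L₂ : ℝ)) / ((L₁ : ℝ) * (L₂ : ℝ))) * ν ^ (L₁ - 1)))
        atTop (nhds 1) := by
  intro l₁ l₂ hl₁ hl₁L hl₂ hl₂L
  have hlim := tendsto_finsetSum (Icc (-(l₁ : ℤ)) ((l₂ : ℤ) - 1)) fun l hl =>
    tendsto_bipMeanUpTime_div_pow (L₂ := L₂) (l := l) hL₁ (by simp only [mem_Icc] at hl; omega)
  rw [sum_bipLeadingCoeff (by omega) (by omega)] at hlim
  have hc : (L₁ : ℝ)⁻¹ + (L₂ : ℝ)⁻¹ = ((L₁ : ℝ) + L₂) / (L₁ * L₂) :=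
    inv_add_inv (by positivity) (by positivity)
  have hc0 : ((L₁ : ℝ) + L₂) / (L₁ * L₂) ≠ 0 := by positivity
  have hnorm := hlim.div_const (((L₁ : ℝ) + L₂) / (L₁ * L₂))
  rw [hc, div_self hc0] at hnorm
  refine hnorm.congr fun ν => ?_
  rw [← sum_div, div_div, mul_comm]
end

section
/- For each ν > 0, let T(ν), U(ν), V(ν), W(ν) be nonnegative integrable random variables on a common probability space, with E U(ν) > 0 and E T(ν) > 0. Assume: (i) E V(ν)/E U(ν) → 0 and E W(ν)/E U(ν) → 0 as ν → ∞; (ii) for every ν > 0 and every t > 0, P(U(ν) − V(ν) > t) ≤ P(T(ν) > t) ≤ P(U(ν) + W(ν) > t); (iii) U(ν)/E U(ν) converges in distribution, as ν → ∞, to a random variable X (not depending on ν) whose cumulative distribution function is continuous. Then T(ν)/E T(ν) converges in distribution to X as ν → ∞. -/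
/-!
Comparing tails only at levels `t > 0`, the layer-cake formula gives
`E U - E V ≤ E T ≤ E U + E W`, hence `E T / E U → 1`. Write `a = E U`, `b = E T`. For `s ≥ 0`
and `δ > 0`, the tail comparison at the level `s b` together with Markov's inequality for `V`
and `W` at the level `δ a` traps `P(T/b ≤ s)` between the c.d.f. of `U/a` at `s (b/a) ∓ δ`, up
to errors `(E V/a)/δ` and `(E W/a)/δ`. Since the c.d.f. of `X` is continuous, the c.d.f.s of
`U/a` converge to it everywhere, so letting `ν → ∞` and then `δ → 0` the c.d.f.s of `T/b`
converge to it too. Pointwise convergence of c.d.f.s gives weak convergence, since half-open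
intervals form a π-system containing arbitrarily small neighbourhoods of every point.
-/

open Filter MeasureTheory ProbabilityTheory

open Set Topology
open scoped BoundedContinuousFunction

section Squeeze

variable {ι : Type*} {L : Filter ι}

lemma tendsto_div_of_mem_Icc_sub_add {a b v w : ι → ℝ}
    (hv : Tendsto (fun i => v i / a i) L (𝓝 0)) (hw : Tendsto (fun i => w i / a i) L (𝓝 0))
    (h : ∀ᶠ i in L, 0 < a i ∧ b i ∈ Icc (a i - v i) (a i + w i)) :
    Tendsto (fun i => b i / a i) L (𝓝 1) := by
  refine tendsto_of_tendsto_of_tendsto_of_le_of_le' (by simpa using tendsto_const_nhds.sub hv)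
    (by simpa using tendsto_const_nhds.add hw) ?_ ?_
  · filter_upwards [h] with i ⟨ha, hlo, _⟩
    rwa [one_sub_div ha.ne', div_le_div_iff_of_pos_right ha]
  · filter_upwards [h] with i ⟨ha, _, hhi⟩
    rwa [one_add_div ha.ne', div_le_div_iff_of_pos_right ha]

variable {G : ι → ℝ → ℝ} {F : ℝ → ℝ} {x : ℝ} {xs H e : ι → ℝ}

lemma eventually_lt_of_forall_sub_le (hG : ∀ i, Monotone (G i))
    (hGF : ∀ y, Tendsto (fun i => G i y) L (𝓝 (F y))) (hF : ContinuousAt F x)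
    (hxs : Tendsto xs L (𝓝 x)) (he : Tendsto e L (𝓝 0))
    (hH : ∀ᶠ i in L, ∀ δ > 0, G i (xs i - δ) - e i / δ ≤ H i) {y : ℝ} (hy : y < F x) :
    ∀ᶠ i in L, y < H i := by
  obtain ⟨ε, hε, hFε⟩ := Metric.eventually_nhds_iff.1 (hF.eventually (lt_mem_nhds hy))
  set δ := ε / 3 with hδε
  have hδ : 0 < δ := by positivity
  have hy' : y < F (x - 2 * δ) := hFε (by rw [Real.dist_eq, abs_lt]; constructor <;> linarith)
  have hlim : Tendsto (fun i => G i (x - 2 * δ) - e i / δ) L (𝓝 (F (x - 2 * δ))) := by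
    simpa using (hGF _).sub (he.div_const δ)
  filter_upwards [hH, hlim.eventually (lt_mem_nhds hy'),
    hxs.eventually (lt_mem_nhds (show x - δ < x by linarith))] with i hHi hi hxi
  calc y < G i (x - 2 * δ) - e i / δ := hi
    _ ≤ G i (xs i - δ) - e i / δ := by gcongr; exact hG i (by linarith)
    _ ≤ H i := hHi δ hδ

lemma eventually_gt_of_forall_le_add (hG : ∀ i, Monotone (G i))
    (hGF : ∀ y, Tendsto (fun i => G i y) L (𝓝 (F y))) (hF : ContinuousAt F x)
    (hxs : Tendsto xs L (𝓝 x)) (he : Tendsto e L (𝓝 0))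
    (hH : ∀ᶠ i in L, ∀ δ > 0, H i ≤ G i (xs i + δ) + e i / δ) {y : ℝ} (hy : F x < y) :
    ∀ᶠ i in L, H i < y := by
  obtain ⟨ε, hε, hFε⟩ := Metric.eventually_nhds_iff.1 (hF.eventually (gt_mem_nhds hy))
  set δ := ε / 3 with hδε
  have hδ : 0 < δ := by positivity
  have hy' : F (x + 2 * δ) < y := hFε (by rw [Real.dist_eq, abs_lt]; constructor <;> linarith)
  have hlim : Tendsto (fun i => G i (x + 2 * δ) + e i / δ) L (𝓝 (F (x + 2 * δ))) := by
    simpa using (hGF _).add (he.div_const δ)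
  filter_upwards [hH, hlim.eventually (gt_mem_nhds hy'),
    hxs.eventually (gt_mem_nhds (show x < x + δ by linarith))] with i hHi hi hxi
  calc H i ≤ G i (xs i + δ) + e i / δ := hHi δ hδ
    _ ≤ G i (x + 2 * δ) + e i / δ := by gcongr; exact hG i (by linarith)
    _ < y := hi

lemma tendsto_of_forall_mem_Icc_sub_add (hG : ∀ i, Monotone (G i))
    (hGF : ∀ y, Tendsto (fun i => G i y) L (𝓝 (F y))) (hF : ContinuousAt F x)
    (hxs : Tendsto xs L (𝓝 x)) {e' : ι → ℝ} (he : Tendsto e L (𝓝 0))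
    (he' : Tendsto e' L (𝓝 0))
    (hH : ∀ᶠ i in L, ∀ δ > 0, H i ∈ Icc (G i (xs i - δ) - e' i / δ) (G i (xs i + δ) + e i / δ)) :
    Tendsto H L (𝓝 (F x)) :=
  tendsto_order.2
    ⟨fun _ hy => eventually_lt_of_forall_sub_le hG hGF hF hxs he'
      (hH.mono fun _ h δ hδ => (h δ hδ).1) hy,
    fun _ hy => eventually_gt_of_forall_le_add hG hGF hF hxs he
      (hH.mono fun _ h δ hδ => (h δ hδ).2) hy⟩

end Squeeze

namespace MeasureTheory

lemma measureReal_Ioc_eq_cdf_sub_cdf (μ : Measure ℝ) [IsProbabilityMeasure μ] {a b : ℝ}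
    (hab : a ≤ b) : μ.real (Ioc a b) = cdf μ b - cdf μ a := by
  have h := (cdf μ).measure_Ioc a b
  rw [measure_cdf] at h
  rw [measureReal_def, h, ENNReal.toReal_ofReal (sub_nonneg.2 (monotone_cdf μ hab))]

lemma measure_singleton_eq_zero_of_continuousAt_cdf {μ : Measure ℝ} [IsProbabilityMeasure μ]
    {x : ℝ} (hx : ContinuousAt (cdf μ) x) : μ {x} = 0 := by
  have h := (cdf μ).measure_singleton x
  rwa [measure_cdf, hx.continuousWithinAt.leftLim_eq, sub_self, ENNReal.ofReal_zero] at h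

namespace ProbabilityMeasure

variable {ι : Type*} {L : Filter ι} {μs : ι → ProbabilityMeasure ℝ} {μ : ProbabilityMeasure ℝ}

lemma tendsto_cdf_of_tendsto (h : Tendsto μs L (𝓝 μ)) {x : ℝ}
    (hx : ContinuousAt (cdf μ) x) :
    Tendsto (fun i => cdf (μs i) x) L (𝓝 (cdf μ x)) := by
  have hnull : (μ : Measure ℝ) (frontier (Iic x)) = 0 := by
    rw [frontier_Iic]; exact measure_singleton_eq_zero_of_continuousAt_cdf hx
  simp only [cdf_eq_real, measureReal_def]
  exact (ENNReal.tendsto_toReal (measure_ne_top _ _)).comp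
    (tendsto_measure_of_null_frontier_of_tendsto' h hnull)

lemma tendsto_of_forall_tendsto_cdf [L.IsCountablyGenerated]
    (h : ∀ x, Tendsto (fun i => cdf (μs i) x) L (𝓝 (cdf μ x))) : Tendsto μs L (𝓝 μ) := by
  refine (isPiSystem_Ioc (id : ℝ → ℝ) id).tendsto_probabilityMeasure_of_tendsto_of_mem
    (by rintro _ ⟨a, b, -, rfl⟩; exact measurableSet_Ioc) ?_ ?_
  · intro u hu x hx
    obtain ⟨a, b, ⟨hax, hxb⟩, hab⟩ := mem_nhds_iff_exists_Ioo_subset.1 (hu.mem_nhds hx)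
    obtain ⟨c, hxc, hcb⟩ := exists_between hxb
    exact ⟨Ioc a c, ⟨a, c, hax.trans hxc, rfl⟩, Ioc_mem_nhds hax hxc,
      (Ioc_subset_Ioo_right hcb).trans hab⟩
  · rintro _ ⟨a, b, hab, rfl⟩
    rw [← NNReal.tendsto_coe]
    simp only [coeFn_def, ENNReal.coe_toNNReal_eq_toReal, ← measureReal_def, id]
    have hIoc (ν : ProbabilityMeasure ℝ) : (ν : Measure ℝ).real (Ioc a b) = cdf ν b - cdf ν a :=
      measureReal_Ioc_eq_cdf_sub_cdf _ hab.le
    simpa only [hIoc] using (h b).sub (h a)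

lemma tendsto_map_iff_forall_integral_tendsto {Ω : ι → Type*} [∀ i, MeasurableSpace (Ω i)]
    {E : Type*} [MeasurableSpace E] [TopologicalSpace E] [OpensMeasurableSpace E]
    (P : ∀ i, ProbabilityMeasure (Ω i)) {X : ∀ i, Ω i → E} (hX : ∀ i, AEMeasurable (X i) (P i))
    {μ : ProbabilityMeasure E} :
    Tendsto (fun i => (P i).map (hX i)) L (𝓝 μ) ↔
      ∀ f : E →ᵇ ℝ, Tendsto (fun i => ∫ ω, f (X i ω) ∂(P i : Measure (Ω i))) L
        (𝓝 (∫ x, f x ∂(μ : Measure E))) := by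
  refine tendsto_iff_forall_integral_tendsto.trans (forall_congr' fun f => ?_)
  simp only [toMeasure_map, integral_map (hX _) f.continuous.aestronglyMeasurable]

variable {Ω : Type*} [MeasurableSpace Ω] (P : ProbabilityMeasure Ω) {X : Ω → ℝ}
  (hX : AEMeasurable X P)

lemma cdf_map_eq_measureReal (x : ℝ) : cdf (P.map hX) x = (P : Measure Ω).real {ω | X ω ≤ x} := by
  rw [cdf_eq_real, toMeasure_map, map_measureReal_apply_of_aemeasurable hX measurableSet_Iic]
  rfl

lemma cdf_map_eq_zero_of_nonneg (hX0 : ∀ ω, 0 ≤ X ω) {x : ℝ} (hx : x < 0) :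
    cdf (P.map hX) x = 0 := by
  rw [cdf_map_eq_measureReal, ← measureReal_empty (μ := (P : Measure Ω))]
  congr 1
  exact eq_empty_of_forall_notMem fun ω hω => (hx.trans_le (hX0 ω)).not_ge hω

end ProbabilityMeasure

section TailComparison

variable {Ω : Type*} [MeasurableSpace Ω] {μ : Measure Ω} {X Y : Ω → ℝ}

lemma lintegral_ofReal_le_of_forall_measure_lt_le (hX : AEMeasurable X μ)
    (hY : AEMeasurable Y μ) (hY0 : 0 ≤ᵐ[μ] Y) (h : ∀ t > 0, μ {ω | t < X ω} ≤ μ {ω | t < Y ω}) :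
    ∫⁻ ω, ENNReal.ofReal (X ω) ∂μ ≤ ∫⁻ ω, ENNReal.ofReal (Y ω) ∂μ := by
  have hX0 : 0 ≤ᵐ[μ] fun ω => max (X ω) 0 := ae_of_all _ fun _ => le_max_right _ _
  calc ∫⁻ ω, ENNReal.ofReal (X ω) ∂μ = ∫⁻ ω, ENNReal.ofReal (max (X ω) 0) ∂μ := by
        simp only [ENNReal.ofReal_max, ENNReal.ofReal_zero, max_zero]
    _ = ∫⁻ t in Ioi 0, μ {ω | t < max (X ω) 0} :=
        lintegral_eq_lintegral_meas_lt μ hX0 (hX.max aemeasurable_const)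
    _ ≤ ∫⁻ t in Ioi 0, μ {ω | t < Y ω} := by
        refine setLIntegral_mono' measurableSet_Ioi fun t ht => ?_
        simpa only [lt_max_iff, (mem_Ioi.1 ht).not_gt, or_false] using h t ht
    _ = ∫⁻ ω, ENNReal.ofReal (Y ω) ∂μ := (lintegral_eq_lintegral_meas_lt μ hY0 hY).symm

lemma integral_le_integral_of_forall_measure_lt_le (hX : Integrable X μ) (hY : Integrable Y μ)
    (hY0 : 0 ≤ᵐ[μ] Y) (h : ∀ t > 0, μ {ω | t < X ω} ≤ μ {ω | t < Y ω}) :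
    ∫ ω, X ω ∂μ ≤ ∫ ω, Y ω ∂μ := by
  rw [integral_eq_lintegral_pos_part_sub_lintegral_neg_part hX,
    integral_eq_lintegral_of_nonneg_ae hY0 hY.aestronglyMeasurable]
  exact (sub_le_self _ ENNReal.toReal_nonneg).trans <| ENNReal.toReal_mono
    hY.lintegral_lt_top.ne (lintegral_ofReal_le_of_forall_measure_lt_le hX.aemeasurable
      hY.aemeasurable hY0 h)

lemma measureReal_le_le_integral_div (hX0 : 0 ≤ᵐ[μ] X) (hXi : Integrable X μ) {c : ℝ}
    (hc : 0 < c) : μ.real {ω | c ≤ X ω} ≤ (∫ ω, X ω ∂μ) / c :=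
  (le_div_iff₀' hc).2 (mul_meas_ge_le_integral_of_nonneg hX0 hXi c)

lemma measureReal_le_le_of_measure_lt_le [IsProbabilityMeasure μ] (hX : AEMeasurable X μ)
    (hY : AEMeasurable Y μ) {t : ℝ} (h : μ {ω | t < Y ω} ≤ μ {ω | t < X ω}) :
    μ.real {ω | X ω ≤ t} ≤ μ.real {ω | Y ω ≤ t} := by
  have hcompl (Z : Ω → ℝ) : {ω | Z ω ≤ t} = {ω | t < Z ω}ᶜ := by ext; simp
  rw [hcompl, hcompl, probReal_compl_eq_one_sub₀ (nullMeasurableSet_lt aemeasurable_const hX),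
    probReal_compl_eq_one_sub₀ (nullMeasurableSet_lt aemeasurable_const hY)]
  exact sub_le_sub_left (ENNReal.toReal_mono (measure_ne_top _ _) h) 1

end TailComparison

section TailSandwich

variable {Ω : Type*} [MeasurableSpace Ω] {P : Measure Ω} {T U V W : Ω → ℝ}

lemma integral_mem_Icc_of_forall_measure_lt_le (hTi : Integrable T P) (hUi : Integrable U P)
    (hVi : Integrable V P) (hWi : Integrable W P) (hT0 : ∀ ω, 0 ≤ T ω) (hU0 : ∀ ω, 0 ≤ U ω)
    (hW0 : ∀ ω, 0 ≤ W ω) (h : ∀ t > 0, P {ω | t < U ω - V ω} ≤ P {ω | t < T ω} ∧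
      P {ω | t < T ω} ≤ P {ω | t < U ω + W ω}) :
    ∫ ω, T ω ∂P ∈ Icc (∫ ω, U ω ∂P - ∫ ω, V ω ∂P) (∫ ω, U ω ∂P + ∫ ω, W ω ∂P) := by
  rw [← integral_sub hUi hVi, ← integral_add hUi hWi]
  exact ⟨integral_le_integral_of_forall_measure_lt_le (hUi.sub hVi) hTi (ae_of_all _ hT0)
      fun t ht => (h t ht).1,
    integral_le_integral_of_forall_measure_lt_le hTi (hUi.add hWi)
      (ae_of_all _ fun ω => add_nonneg (hU0 ω) (hW0 ω)) fun t ht => (h t ht).2⟩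

variable [IsProbabilityMeasure P] {t c : ℝ}

lemma measureReal_le_le_add_of_forall_measure_lt_sub_le (hT : AEMeasurable T P)
    (hU : AEMeasurable U P) (hV : AEMeasurable V P)
    (h : ∀ t > 0, P {ω | t < U ω - V ω} ≤ P {ω | t < T ω}) (ht : 0 ≤ t) (hc : 0 < c) :
    P.real {ω | T ω ≤ t} ≤ P.real {ω | U ω ≤ t + 2 * c} + P.real {ω | c ≤ V ω} :=
  calc P.real {ω | T ω ≤ t} ≤ P.real {ω | T ω ≤ t + c} :=
        measureReal_mono fun ω (hω : T ω ≤ t) => show T ω ≤ t + c by linarith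
    _ ≤ P.real {ω | U ω - V ω ≤ t + c} :=
        measureReal_le_le_of_measure_lt_le hT (hU.sub hV) (h _ (by linarith))
    _ ≤ P.real ({ω | U ω ≤ t + 2 * c} ∪ {ω | c ≤ V ω}) := by
        refine measureReal_mono fun ω (hω : U ω - V ω ≤ t + c) => ?_
        by_cases hVω : c ≤ V ω
        · exact Or.inr hVω
        · exact Or.inl (show U ω ≤ t + 2 * c by linarith)
    _ ≤ _ := measureReal_union_le _ _

lemma measureReal_sub_le_le_add_of_forall_measure_lt_le_add (hT : AEMeasurable T P)
    (hU : AEMeasurable U P) (hW : AEMeasurable W P) (hU0 : ∀ ω, 0 ≤ U ω)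
    (h : ∀ t > 0, P {ω | t < T ω} ≤ P {ω | t < U ω + W ω}) (ht : 0 ≤ t) (hc : 0 < c) :
    P.real {ω | U ω ≤ t - c} ≤ P.real {ω | T ω ≤ t} + P.real {ω | c ≤ W ω} := by
  rcases ht.eq_or_lt with rfl | ht
  · have hempty : {ω | U ω ≤ 0 - c} = ∅ :=
      eq_empty_of_forall_notMem fun ω (hω : U ω ≤ 0 - c) => by linarith [hU0 ω]
    rw [hempty, measureReal_empty]
    positivity
  calc P.real {ω | U ω ≤ t - c} ≤ P.real ({ω | U ω + W ω ≤ t} ∪ {ω | c ≤ W ω}) := by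
        refine measureReal_mono fun ω (hω : U ω ≤ t - c) => ?_
        by_cases hWω : c ≤ W ω
        · exact Or.inr hWω
        · exact Or.inl (show U ω + W ω ≤ t by linarith)
    _ ≤ P.real {ω | U ω + W ω ≤ t} + P.real {ω | c ≤ W ω} := measureReal_union_le _ _
    _ ≤ P.real {ω | T ω ≤ t} + P.real {ω | c ≤ W ω} :=
        add_le_add_left (measureReal_le_le_of_measure_lt_le (hU.add hW) hT (h t ht)) _

variable {a b s δ : ℝ}

lemma measureReal_div_le_le_add (hT : AEMeasurable T P) (hU : AEMeasurable U P)
    (hV0 : 0 ≤ᵐ[P] V) (hVi : Integrable V P)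
    (h : ∀ t > 0, P {ω | t < U ω - V ω} ≤ P {ω | t < T ω})
    (ha : 0 < a) (hb : 0 < b) (hs : 0 ≤ s) (hδ : 0 < δ) :
    P.real {ω | T ω / b ≤ s} ≤
      P.real {ω | U ω / a ≤ s * (b / a) + δ} + 2 * ((∫ ω, V ω ∂P) / a) / δ := by
  have hlevel : (s * (b / a) + δ) * a = s * b + 2 * (δ * a / 2) := by field_simp
  have hMarkov := measureReal_le_le_integral_div hV0 hVi (by positivity : 0 < δ * a / 2)
  rw [show (∫ ω, V ω ∂P) / (δ * a / 2) = 2 * ((∫ ω, V ω ∂P) / a) / δ by field_simp] at hMarkov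
  simp only [div_le_iff₀ hb, div_le_iff₀ ha, hlevel]
  exact (measureReal_le_le_add_of_forall_measure_lt_sub_le (t := s * b) (c := δ * a / 2) hT hU
    hVi.aemeasurable h (by positivity) (by positivity)).trans (add_le_add_right hMarkov _)

lemma measureReal_div_sub_le_le_add (hT : AEMeasurable T P) (hU : AEMeasurable U P)
    (hU0 : ∀ ω, 0 ≤ U ω) (hW0 : 0 ≤ᵐ[P] W) (hWi : Integrable W P)
    (h : ∀ t > 0, P {ω | t < T ω} ≤ P {ω | t < U ω + W ω})
    (ha : 0 < a) (hb : 0 < b) (hs : 0 ≤ s) (hδ : 0 < δ) :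
    P.real {ω | U ω / a ≤ s * (b / a) - δ} - (∫ ω, W ω ∂P) / a / δ ≤
      P.real {ω | T ω / b ≤ s} := by
  have hlevel : (s * (b / a) - δ) * a = s * b - δ * a := by field_simp
  have hMarkov := measureReal_le_le_integral_div hW0 hWi (by positivity : 0 < δ * a)
  rw [show (∫ ω, W ω ∂P) / (δ * a) = (∫ ω, W ω ∂P) / a / δ by field_simp] at hMarkov
  simp only [div_le_iff₀ hb, div_le_iff₀ ha, hlevel]
  linarith [measureReal_sub_le_le_add_of_forall_measure_lt_le_add hT hU hWi.aemeasurable hU0 h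
    (by positivity : 0 ≤ s * b) (by positivity : 0 < δ * a)]

lemma measureReal_div_le_mem_Icc_of_forall_measure_lt_le (hT : AEMeasurable T P)
    (hU : AEMeasurable U P) (hU0 : ∀ ω, 0 ≤ U ω) (hV0 : ∀ ω, 0 ≤ V ω) (hW0 : ∀ ω, 0 ≤ W ω)
    (hVi : Integrable V P) (hWi : Integrable W P)
    (h : ∀ t > 0, P {ω | t < U ω - V ω} ≤ P {ω | t < T ω} ∧
      P {ω | t < T ω} ≤ P {ω | t < U ω + W ω})
    (ha : 0 < a) (hb : 0 < b) (hs : 0 ≤ s) (hδ : 0 < δ) :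
    P.real {ω | T ω / b ≤ s} ∈
      Icc (P.real {ω | U ω / a ≤ s * (b / a) - δ} - (∫ ω, W ω ∂P) / a / δ)
        (P.real {ω | U ω / a ≤ s * (b / a) + δ} + 2 * ((∫ ω, V ω ∂P) / a) / δ) :=
  ⟨measureReal_div_sub_le_le_add hT hU hU0 (ae_of_all _ hW0) hWi (fun t ht => (h t ht).2)
      ha hb hs hδ,
    measureReal_div_le_le_add hT hU (ae_of_all _ hV0) hVi (fun t ht => (h t ht).1) ha hb hs hδ⟩

end TailSandwich

end MeasureTheory

theorem scaled_transition_time_sandwich_general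
    {Ω : ℝ → Type*} [∀ ν, MeasurableSpace (Ω ν)]
    (P : ∀ ν : ℝ, Measure (Ω ν)) (hP : ∀ ν, IsProbabilityMeasure (P ν))
    (T U V W : ∀ ν : ℝ, Ω ν → ℝ)
    (hTm : ∀ ν, Measurable (T ν)) (hUm : ∀ ν, Measurable (U ν))
    (hTnn : ∀ ν, 0 < ν → ∀ ω, 0 ≤ T ν ω) (hUnn : ∀ ν, 0 < ν → ∀ ω, 0 ≤ U ν ω)
    (hVnn : ∀ ν, 0 < ν → ∀ ω, 0 ≤ V ν ω) (hWnn : ∀ ν, 0 < ν → ∀ ω, 0 ≤ W ν ω)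
    (hTi : ∀ ν, 0 < ν → Integrable (T ν) (P ν))
    (hUi : ∀ ν, 0 < ν → Integrable (U ν) (P ν))
    (hVi : ∀ ν, 0 < ν → Integrable (V ν) (P ν))
    (hWi : ∀ ν, 0 < ν → Integrable (W ν) (P ν))
    (hUpos : ∀ ν, 0 < ν → 0 < ∫ ω, U ν ω ∂(P ν))
    (hV : Tendsto (fun ν => (∫ ω, V ν ω ∂(P ν)) / ∫ ω, U ν ω ∂(P ν))
      atTop (nhds 0))
    (hW : Tendsto (fun ν => (∫ ω, W ν ω ∂(P ν)) / ∫ ω, U ν ω ∂(P ν))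
      atTop (nhds 0))
    (hsandwich : ∀ ν, 0 < ν → ∀ t : ℝ, 0 < t →
      P ν {ω | t < U ν ω - V ν ω} ≤ P ν {ω | t < T ν ω} ∧
      P ν {ω | t < T ν ω} ≤ P ν {ω | t < U ν ω + W ν ω})
    (μX : Measure ℝ) (hμX : IsProbabilityMeasure μX)
    (hcdf : Continuous (cdf μX))
    (hUconv : ∀ f : BoundedContinuousFunction ℝ ℝ,
      Tendsto (fun ν => ∫ ω, f (U ν ω / ∫ ω', U ν ω' ∂(P ν)) ∂(P ν))
        atTop (nhds (∫ x, f x ∂μX))) :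
    ∀ f : BoundedContinuousFunction ℝ ℝ,
      Tendsto (fun ν => ∫ ω, f (T ν ω / ∫ ω', T ν ω' ∂(P ν)) ∂(P ν))
        atTop (nhds (∫ x, f x ∂μX)) := by
  set a : ℝ → ℝ := fun ν => ∫ ω, U ν ω ∂(P ν)
  set b : ℝ → ℝ := fun ν => ∫ ω, T ν ω ∂(P ν)
  have hba : Tendsto (fun ν => b ν / a ν) atTop (𝓝 1) := by
    refine tendsto_div_of_mem_Icc_sub_add hV hW ?_
    filter_upwards [eventually_gt_atTop 0] with ν hν
    exact ⟨hUpos ν hν, integral_mem_Icc_of_forall_measure_lt_le (hTi ν hν) (hUi ν hν) (hVi ν hν)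
      (hWi ν hν) (hTnn ν hν) (hUnn ν hν) (hWnn ν hν) (hsandwich ν hν)⟩
  have hb : ∀ᶠ ν in atTop, 0 < b ν := by
    filter_upwards [hba.eventually (eventually_gt_nhds one_pos), eventually_gt_atTop 0]
      with ν hr hν
    exact (div_pos_iff_of_pos_right (hUpos ν hν)).1 hr
  let μU (ν : ℝ) : ProbabilityMeasure ℝ :=
    ProbabilityMeasure.map ⟨P ν, hP ν⟩ ((hUm ν).div_const (a ν)).aemeasurable
  let μT (ν : ℝ) : ProbabilityMeasure ℝ :=
    ProbabilityMeasure.map ⟨P ν, hP ν⟩ ((hTm ν).div_const (b ν)).aemeasurable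
  have hcdfU (x : ℝ) : Tendsto (fun ν => cdf (μU ν) x) atTop (𝓝 (cdf μX x)) :=
    ProbabilityMeasure.tendsto_cdf_of_tendsto (μ := ⟨μX, hμX⟩)
      ((ProbabilityMeasure.tendsto_map_iff_forall_integral_tendsto _ _).2 hUconv)
      hcdf.continuousAt
  refine (ProbabilityMeasure.tendsto_map_iff_forall_integral_tendsto (μ := ⟨μX, hμX⟩) _ _).1
    (ProbabilityMeasure.tendsto_of_forall_tendsto_cdf (μs := μT) fun s => ?_)
  rcases lt_or_ge s 0 with hs | hs
  · refine (hcdfU s).congr' ?_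
    filter_upwards [eventually_gt_atTop 0, hb] with ν hν hbν
    exact (ProbabilityMeasure.cdf_map_eq_zero_of_nonneg _ _
        (fun ω => div_nonneg (hUnn ν hν ω) (hUpos ν hν).le) hs).trans
      (ProbabilityMeasure.cdf_map_eq_zero_of_nonneg _ _
        (fun ω => div_nonneg (hTnn ν hν ω) hbν.le) hs).symm
  · refine tendsto_of_forall_mem_Icc_sub_add (fun ν => monotone_cdf _) hcdfU hcdf.continuousAt
      (by simpa using hba.const_mul s) (by simpa using hV.const_mul 2) hW ?_
    filter_upwards [eventually_gt_atTop 0, hb] with ν hν hbν δ hδ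
    simp only [μU, μT, ProbabilityMeasure.cdf_map_eq_measureReal ⟨P ν, hP ν⟩]
    exact measureReal_div_le_mem_Icc_of_forall_measure_lt_le (P := P ν) (hTm ν).aemeasurable
      (hUm ν).aemeasurable (hUnn ν hν) (hVnn ν hν) (hWnn ν hν) (hVi ν hν) (hWi ν hν)
      (hsandwich ν hν) (hUpos ν hν) hbν hs hδ

/-- For each `ν > 0`, let `T(ν), U(ν), V(ν), W(ν)` be nonnegative integrable
random variables on a common probability space `(Ω ν, P ν)`, with
`E U(ν) > 0` and `E T(ν) > 0`.  Assume:
(i) `E V(ν)/E U(ν) → 0` and `E W(ν)/E U(ν) → 0` as `ν → ∞`;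
(ii) for every `ν > 0` and every `t > 0`,
`P(U(ν) − V(ν) > t) ≤ P(T(ν) > t) ≤ P(U(ν) + W(ν) > t)`;
(iii) `U(ν)/E U(ν)` converges in distribution, as `ν → ∞`, to a law `μX`
(independent of `ν`) with continuous c.d.f.
Then `T(ν)/E T(ν)` converges in distribution to `μX` as `ν → ∞`. -/
theorem scaled_transition_time_sandwich
    {Ω : ℝ → Type*} [∀ ν, MeasurableSpace (Ω ν)]
    (P : ∀ ν : ℝ, Measure (Ω ν)) (hP : ∀ ν, IsProbabilityMeasure (P ν))
    (T U V W : ∀ ν : ℝ, Ω ν → ℝ)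
    (hTm : ∀ ν, Measurable (T ν)) (hUm : ∀ ν, Measurable (U ν))
    (hVm : ∀ ν, Measurable (V ν)) (hWm : ∀ ν, Measurable (W ν))
    (hTnn : ∀ ν, 0 < ν → ∀ ω, 0 ≤ T ν ω) (hUnn : ∀ ν, 0 < ν → ∀ ω, 0 ≤ U ν ω)
    (hVnn : ∀ ν, 0 < ν → ∀ ω, 0 ≤ V ν ω) (hWnn : ∀ ν, 0 < ν → ∀ ω, 0 ≤ W ν ω)
    (hTi : ∀ ν, 0 < ν → Integrable (T ν) (P ν))
    (hUi : ∀ ν, 0 < ν → Integrable (U ν) (P ν))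
    (hVi : ∀ ν, 0 < ν → Integrable (V ν) (P ν))
    (hWi : ∀ ν, 0 < ν → Integrable (W ν) (P ν))
    (hUpos : ∀ ν, 0 < ν → 0 < ∫ ω, U ν ω ∂(P ν))
    (hTpos : ∀ ν, 0 < ν → 0 < ∫ ω, T ν ω ∂(P ν))
    (hV : Tendsto (fun ν => (∫ ω, V ν ω ∂(P ν)) / ∫ ω, U ν ω ∂(P ν))
      atTop (nhds 0))
    (hW : Tendsto (fun ν => (∫ ω, W ν ω ∂(P ν)) / ∫ ω, U ν ω ∂(P ν))
      atTop (nhds 0))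
    (hsandwich : ∀ ν, 0 < ν → ∀ t : ℝ, 0 < t →
      P ν {ω | t < U ν ω - V ν ω} ≤ P ν {ω | t < T ν ω} ∧
      P ν {ω | t < T ν ω} ≤ P ν {ω | t < U ν ω + W ν ω})
    (μX : Measure ℝ) (hμX : IsProbabilityMeasure μX)
    (hcdf : Continuous (cdf μX))
    (hUconv : ∀ f : BoundedContinuousFunction ℝ ℝ,
      Tendsto (fun ν => ∫ ω, f (U ν ω / ∫ ω', U ν ω' ∂(P ν)) ∂(P ν))
        atTop (nhds (∫ x, f x ∂μX))) :
    ∀ f : BoundedContinuousFunction ℝ ℝ,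
      Tendsto (fun ν => ∫ ω, f (T ν ω / ∫ ω', T ν ω' ∂(P ν)) ∂(P ν))
        atTop (nhds (∫ x, f x ∂μX)) :=
  scaled_transition_time_sandwich_general P hP T U V W hTm hUm hTnn hUnn hVnn hWnn hTi hUi hVi hWi
    hUpos hV hW hsandwich μX hμX hcdf hUconv
end

section
/- Fix K ≥ 2 and component sizes L_1 ≥ L_2 ≥ ⋯ ≥ L_K ≥ 1. With π the stationary distribution of the star-shaped activity process, the flow rate out of C_2 is Q(C_2, C_2^c) = π_{(2,1)}(ν)·1 (the only transition out of C_2 is from state (2,1) to 0 at rate 1), and the conductance Φ(C_2)(ν) := Q(C_2, C_2^c)/π(C_2), where π(C_2) = Σ_{l=1}^{L_2} π_{(2,l)}(ν), satisfies Φ(C_2)(ν) = C(L_2,1)·ν / Σ_{l=1}^{L_2} C(L_2,l)·ν^l ~ L_2 · ν^{1−L_2} as ν → ∞. -/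
/-! The normalizing constant `π_0` cancels from the conductance, and by the binomial theorem
`Σ_{l=1}^{L} C(L,l) ν^l = (1 + ν)^L - 1 ~ ν^L`, so `Φ(C_2)(ν) = L ν / ((1 + ν)^L - 1) ~ L ν^{1-L}`. -/

open Filter Finset

/-- Normalizing constant of the stationary distribution of the star-shaped
activity process:  `π_0(ν) = (1 + Σ_k Σ_{l=1}^{L_k} C(L_k,l) ν^l)⁻¹`. -/
noncomputable def starPi0 (K : ℕ) (L : Fin K → ℕ) (ν : ℝ) : ℝ :=
  (1 + ∑ k : Fin K, ∑ l ∈ Finset.Icc 1 (L k), ((L k).choose l : ℝ) * ν ^ l)⁻¹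

/-- Stationary probability `π_{(k,l)}(ν) = π_0(ν)·C(L_k,l)·ν^l` of the
star-shaped activity process. -/
noncomputable def starPi (K : ℕ) (L : Fin K → ℕ) (ν : ℝ) (k : Fin K) (l : ℕ) :
    ℝ :=
  starPi0 K L ν * ((L k).choose l : ℝ) * ν ^ l

open Asymptotics

theorem sum_Icc_choose_mul_pow {R : Type*} [CommRing R] (x : R) (n : ℕ) :
    ∑ l ∈ Icc 1 n, (n.choose l : R) * x ^ l = (1 + x) ^ n - 1 := by
  refine eq_sub_of_add_eq ?_
  rw [add_comm 1 x, add_pow, ← Nat.Ico_zero_eq_range, Ico_add_one_right_eq_Icc,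
    ← insert_Icc_add_one_left_eq_Icc (Nat.zero_le n), sum_insert (by simp)]
  simp [add_comm, mul_comm]

theorem isEquivalent_one_add_pow_sub_one {n : ℕ} (hn : n ≠ 0) :
    (fun x : ℝ => (1 + x) ^ n - 1) ~[atTop] fun x => x ^ n := by
  have hlin : (fun x : ℝ => 1 + x) ~[atTop] fun x => x :=
    ((isLittleO_one_left_iff ℝ).2 (tendsto_norm_atTop_atTop.comp tendsto_id)).add_isEquivalent
      IsEquivalent.refl
  exact (hlin.pow n).sub_isLittleO
    ((isLittleO_one_left_iff ℝ).2 (tendsto_norm_atTop_atTop.comp (tendsto_pow_atTop hn)))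

theorem isEquivalent_mul_div_one_add_pow_sub_one {n : ℕ} (hn : n ≠ 0) :
    (fun x : ℝ => n * x / ((1 + x) ^ n - 1)) ~[atTop] fun x => n * x ^ ((1 : ℤ) - n) := by
  refine (IsEquivalent.refl.div (isEquivalent_one_add_pow_sub_one hn)).congr_right ?_
  filter_upwards [eventually_ne_atTop 0] with x hx
  simp only [Pi.div_apply, zpow_sub₀ hx, zpow_one, zpow_natCast, mul_div_assoc]

theorem starPi0_pos (K : ℕ) (L : Fin K → ℕ) {ν : ℝ} (hν : 0 ≤ ν) : 0 < starPi0 K L ν := by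
  unfold starPi0
  positivity

theorem starPi_one_div_sum_starPi (K : ℕ) (L : Fin K → ℕ) (k : Fin K) {ν : ℝ} (hν : 0 ≤ ν) :
    starPi K L ν k 1 * 1 / ∑ l ∈ Icc 1 (L k), starPi K L ν k l =
      ((L k).choose 1 : ℝ) * ν / ∑ l ∈ Icc 1 (L k), ((L k).choose l : ℝ) * ν ^ l := by
  simp only [starPi, mul_assoc, mul_one, pow_one, ← mul_sum]
  exact mul_div_mul_left _ _ (starPi0_pos K L hν).ne'

/-- Fix `K ≥ 2` and component sizes `L_1 ≥ L_2 ≥ ⋯ ≥ L_K ≥ 1`.  The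
conductance of the second component `C_2`,
`Φ(C_2)(ν) = Q(C_2,C_2^c)/π(C_2) = π_{(2,1)}(ν)·1 / Σ_{l=1}^{L_2} π_{(2,l)}(ν)`,
equals `C(L_2,1)·ν / Σ_{l=1}^{L_2} C(L_2,l)·ν^l` and satisfies
`Φ(C_2)(ν) ~ L_2·ν^{1−L_2}` as `ν → ∞`. -/
theorem conductance_second_component (K : ℕ) (hK : 2 ≤ K)
    (L : Fin K → ℕ)
    (hpos : ∀ k, 1 ≤ L k) :
    (∀ ν : ℝ, 0 < ν →
      starPi K L ν ⟨1, by omega⟩ 1 * 1 /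
          (∑ l ∈ Finset.Icc 1 (L ⟨1, by omega⟩), starPi K L ν ⟨1, by omega⟩ l) =
        ((L ⟨1, by omega⟩).choose 1 : ℝ) * ν /
          ∑ l ∈ Finset.Icc 1 (L ⟨1, by omega⟩),
            ((L ⟨1, by omega⟩).choose l : ℝ) * ν ^ l) ∧
    Tendsto
      (fun ν : ℝ =>
        (starPi K L ν ⟨1, by omega⟩ 1 * 1 /
            (∑ l ∈ Finset.Icc 1 (L ⟨1, by omega⟩), starPi K L ν ⟨1, by omega⟩ l)) /
          ((L ⟨1, by omega⟩ : ℝ) * ν ^ ((1 : ℤ) - (L ⟨1, by omega⟩ : ℤ))))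
      atTop (nhds 1) := by
  set k : Fin K := ⟨1, by omega⟩
  have hconductance (ν : ℝ) (hν : 0 < ν) := starPi_one_div_sum_starPi K L k hν.le
  refine ⟨hconductance, ?_⟩
  have hk : L k ≠ 0 := Nat.one_le_iff_ne_zero.mp (hpos k)
  have hnonzero : ∀ᶠ ν : ℝ in atTop, (L k : ℝ) * ν ^ ((1 : ℤ) - L k) ≠ 0 := by
    filter_upwards [eventually_gt_atTop 0] with ν hν
    positivity
  have hlimit :=
    (isEquivalent_iff_tendsto_one hnonzero).1 (isEquivalent_mul_div_one_add_pow_sub_one hk)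
  refine hlimit.congr' ?_
  filter_upwards [eventually_gt_atTop 0] with ν hν
  rw [Pi.div_apply, hconductance ν hν, sum_Icc_choose_mul_pow, Nat.choose_one_right]
end
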